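/- arXiv:1903.00681 — 5 statements merged into one kernel-verified Lean document; each statement's English description precedes it below -/
import Mathlib

section
/- Let 1 ≤ p ≤ q ≤ ∞. There exist constants c, C > 0 depending only on p and q such that the following holds. For every n ≥ 1 and all points 0 = x_0 ≤ x_1 ≤ … ≤ x_n ≤ x_{n+1} = 1, let ℓ = max_{0 ≤ i ≤ n} (x_{i+1} − x_i) and let R(x_1,…,x_n) = sup{ ‖f‖_{L_q([0,1])} : f ∈ W^1_p([0,1]), ‖f‖_{W^1_p} ≤ 1, f(x_i) = 0 for all 1 ≤ i ≤ n }. Then c · ℓ^{1 − 1/p + 1/q} ≤ R(x_1,…,x_n) ≤ C · ℓ^{1 − 1/p + 1/q}. -/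
open MeasureTheory Set
open scoped ENNReal

/-- Lebesgue measure restricted to the unit interval. -/
noncomputable def mu01 : Measure ℝ := volume.restrict (Set.Icc (0:ℝ) 1)

/-- `f` is in `W^1_p([0,1])` (as a function with a.e. derivative `g`):
`f` is absolutely continuous on `[0,1]`, given as the integral of `g`. -/
def IsW11 (f g : ℝ → ℝ) : Prop :=
  IntervalIntegrable g volume 0 1 ∧
    ∀ x ∈ Set.Icc (0:ℝ) 1, f x = f 0 + ∫ t in (0:ℝ)..x, g t

/-- The `W^1_p([0,1])` norm of `f` with derivative `g`:
`(‖f‖_p^p + ‖g‖_p^p)^(1/p)` for finite `p`, and `max (‖f‖_∞, ‖g‖_∞)` for `p = ∞`. -/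
noncomputable def sobNorm (p : ℝ≥0∞) (f g : ℝ → ℝ) : ℝ≥0∞ :=
  if p = ∞ then max (eLpNorm f ∞ mu01) (eLpNorm g ∞ mu01)
  else (eLpNorm f p mu01 ^ p.toReal + eLpNorm g p mu01 ^ p.toReal) ^ (1 / p.toReal)

/-- The radius of the standard information `f ↦ (f (x 1), …, f (x n))` for
`L_q`-approximation on the unit ball of `W^1_p([0,1])`:
`sup { ‖f‖_q : ‖f‖_{W^1_p} ≤ 1, f (x i) = 0 for 1 ≤ i ≤ n }`. -/
noncomputable def sobRadius (p q : ℝ≥0∞) (n : ℕ) (x : ℕ → ℝ) : ℝ≥0∞ :=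
  ⨆ f : ℝ → ℝ, ⨆ g : ℝ → ℝ,
    ⨆ (_ : IsW11 f g ∧ sobNorm p f g ≤ 1 ∧ ∀ i, 1 ≤ i → i ≤ n → f (x i) = 0),
      eLpNorm f q mu01


/-!
Upper bound: every cell `[x i, x (i+1)]` contains a node where `f` vanishes, so on that cell
`|f| ≤ ∫_cell |f'| ≤ ‖f'‖_{L_p(cell)} ℓ^(1-1/p)` by Hölder. Integrating `|f|^q` cell by cell
gives `‖f‖_q^q ≤ ℓ^((1-1/p) q + 1) ∑ ‖f'‖_{L_p(cell)}^q`, and `∑ aᵢ^q ≤ ∑ aᵢ^p ≤ 1` because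
`aᵢ ≤ 1` and `p ≤ q`.

Lower bound: on a longest cell, the tent of half-width `ℓ/2` centred at its midpoint, scaled by
`ℓ^(-1/p)/2`, vanishes at every node, is Lipschitz (so it lies in `W^1_p` with its a.e.
derivative), has Sobolev norm at most `1`, and is at least `ℓ^(1-1/p)/8` on a set of measure `ℓ/2`.
-/

open scoped NNReal Interval

lemma MonotoneOn.biUnion_Ioc_range {x : ℕ → ℝ} {k : ℕ} (hx : MonotoneOn x (Iic k)) :
    ⋃ i ∈ Finset.range k, Ioc (x i) (x (i + 1)) = Ioc (x 0) (x k) := by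
  induction k with
  | zero => simp
  | succ k ih =>
    rw [Finset.range_add_one, Finset.set_biUnion_insert, ih (hx.mono (Iic_subset_Iic.2 k.le_succ)),
      union_comm, Ioc_union_Ioc_eq_Ioc (hx (by simp) (by simp) k.zero_le)
        (hx (by simp) (by simp) k.le_succ)]

lemma MonotoneOn.lintegral_Ioc_eq_sum {x : ℕ → ℝ} {k : ℕ} (hx : MonotoneOn x (Iic k))
    (h : ℝ → ℝ≥0∞) :
    ∫⁻ t in Ioc (x 0) (x k), h t = ∑ i ∈ Finset.range k, ∫⁻ t in Ioc (x i) (x (i + 1)), h t := by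
  induction k with
  | zero => simp
  | succ k ih =>
    rw [← Ioc_union_Ioc_eq_Ioc (hx (by simp) (by simp) k.zero_le)
        (hx (by simp) (by simp) k.le_succ),
      lintegral_union measurableSet_Ioc (Ioc_disjoint_Ioc_of_le le_rfl),
      ih (hx.mono (Iic_subset_Iic.2 k.le_succ)), Finset.sum_range_succ]

lemma MonotoneOn.notMem_Ioo_succ {x : ℕ → ℝ} {k i j : ℕ} (hx : MonotoneOn x (Iic k))
    (hi : i ≤ k) (hj : j + 1 ≤ k) : x i ∉ Ioo (x j) (x (j + 1)) := fun hij => by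
  rcases le_or_gt i j with h | h
  · exact lt_irrefl _ (hij.1.trans_le (hx (mem_Iic.2 hi) (mem_Iic.2 (by omega)) h))
  · exact lt_irrefl _ (hij.2.trans_le (hx (mem_Iic.2 hj) (mem_Iic.2 hi) h))

lemma pos_of_forall_succ_sub_le {x : ℕ → ℝ} {n : ℕ} {ℓ : ℝ} (hx : x 0 < x (n + 1))
    (hgap : ∀ i ≤ n, x (i + 1) - x i ≤ ℓ) : 0 < ℓ := by
  by_contra! h
  have hsum := Finset.sum_le_sum fun i hi =>
    (hgap i (Nat.lt_succ_iff.1 (Finset.mem_range.1 hi))).trans h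
  rw [Finset.sum_range_sub x, Finset.sum_const_zero] at hsum
  linarith

lemma eLpNorm_rpow_toReal_eq_lintegral {α : Type*} [MeasurableSpace α] {μ : Measure α}
    {p : ℝ≥0∞} (hp0 : p ≠ 0) (hp : p ≠ ∞) (g : α → ℝ) :
    eLpNorm g p μ ^ p.toReal = ∫⁻ t, ‖g t‖ₑ ^ p.toReal ∂μ := by
  rw [eLpNorm_eq_lintegral_rpow_enorm_toReal hp0 hp, ← ENNReal.rpow_mul,
    one_div_mul_cancel (ENNReal.toReal_pos hp0 hp).ne', ENNReal.rpow_one]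

lemma one_div_toReal_le_one {p : ℝ≥0∞} (hp : 1 ≤ p) : (1 / p).toReal ≤ 1 := by
  simpa using ENNReal.toReal_mono ENNReal.one_ne_top (ENNReal.inv_le_one.2 hp)

lemma MonotoneOn.sum_eLpNorm_Ioc_rpow {x : ℕ → ℝ} {k : ℕ} (hx : MonotoneOn x (Iic k))
    {p : ℝ≥0∞} (hp0 : p ≠ 0) (hp : p ≠ ∞) (g : ℝ → ℝ) :
    ∑ i ∈ Finset.range k, eLpNorm g p (volume.restrict (Ioc (x i) (x (i + 1)))) ^ p.toReal
      = eLpNorm g p (volume.restrict (Ioc (x 0) (x k))) ^ p.toReal := by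
  simp only [eLpNorm_rpow_toReal_eq_lintegral hp0 hp, hx.lintegral_Ioc_eq_sum]

lemma mu01_eq_restrict_Ioc : mu01 = volume.restrict (Ioc 0 1) :=
  Measure.restrict_congr_set Ioc_ae_eq_Icc.symm

lemma mu01_univ : mu01 univ = 1 := by
  simp [mu01]

lemma IsW11.sub_eq_integral {f g : ℝ → ℝ} (h : IsW11 f g) {z t : ℝ} (hz : z ∈ Icc (0 : ℝ) 1)
    (ht : t ∈ Icc (0 : ℝ) 1) : f t - f z = ∫ s in z..t, g s := by
  have hint : ∀ w ∈ Icc (0 : ℝ) 1, IntervalIntegrable g volume 0 w := fun w hw =>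
    h.1.mono_set (by rw [uIcc_of_le hw.1, uIcc_of_le zero_le_one]; exact Icc_subset_Icc le_rfl hw.2)
  rw [h.2 t ht, h.2 z hz, add_sub_add_left_eq_sub,
    intervalIntegral.integral_interval_sub_left (hint t ht) (hint z hz)]

lemma enorm_integral_le_eLpNorm_mul_rpow {g : ℝ → ℝ} {p : ℝ≥0∞} (hp : 1 ≤ p) {a b z t : ℝ}
    (hg : AEStronglyMeasurable g (volume.restrict (Ioc a b))) (hz : z ∈ Icc a b)
    (ht : t ∈ Icc a b) :
    ‖∫ s in z..t, g s‖ₑ ≤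
      eLpNorm g p (volume.restrict (Ioc a b)) * ENNReal.ofReal (b - a) ^ (1 - (1 / p).toReal) := by
  have hsub : Ι z t ⊆ Ioc a b := Ioc_subset_Ioc (le_min hz.1 ht.1) (max_le hz.2 ht.2)
  calc ‖∫ s in z..t, g s‖ₑ = ‖∫ s in Ι z t, g s‖ₑ := by
        simp only [← ofReal_norm, intervalIntegral.norm_integral_eq_norm_integral_uIoc]
    _ ≤ ∫⁻ s in Ι z t, ‖g s‖ₑ := enorm_integral_le_lintegral_enorm _
    _ ≤ ∫⁻ s in Ioc a b, ‖g s‖ₑ := lintegral_mono_set hsub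
    _ = eLpNorm g 1 (volume.restrict (Ioc a b)) := eLpNorm_one_eq_lintegral_enorm.symm
    _ ≤ eLpNorm g p (volume.restrict (Ioc a b)) *
          volume.restrict (Ioc a b) univ ^ (1 / (1 : ℝ≥0∞).toReal - 1 / p.toReal) :=
        eLpNorm_le_eLpNorm_mul_rpow_measure_univ hp hg
    _ = _ := by
        rw [Measure.restrict_apply_univ, Real.volume_Ioc, ENNReal.toReal_one, one_div p,
          ENNReal.toReal_inv, div_one, one_div]

lemma IsW11.enorm_le_of_eq_zero {f g : ℝ → ℝ} (h : IsW11 f g) {p : ℝ≥0∞} (hp : 1 ≤ p)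
    {a b z t : ℝ} (ha : 0 ≤ a) (hb : b ≤ 1) (hz : z ∈ Icc a b) (ht : t ∈ Icc a b)
    (hfz : f z = 0) :
    ‖f t‖ₑ ≤
      eLpNorm g p (volume.restrict (Ioc a b)) * ENNReal.ofReal (b - a) ^ (1 - (1 / p).toReal) := by
  have hab : Icc a b ⊆ Icc 0 1 := Icc_subset_Icc ha hb
  have hg : AEStronglyMeasurable g (volume.restrict (Ioc a b)) :=
    ((intervalIntegrable_iff_integrableOn_Ioc_of_le zero_le_one).1 h.1).1.mono_set
      (Ioc_subset_Ioc ha hb)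
  rw [← sub_zero (f t), ← hfz, h.sub_eq_integral (hab hz) (hab ht)]
  exact enorm_integral_le_eLpNorm_mul_rpow hp hg hz ht

lemma eLpNorm_le_sobNorm_right {p : ℝ≥0∞} (hp : p ≠ 0) (f g : ℝ → ℝ) :
    eLpNorm g p mu01 ≤ sobNorm p f g := by
  unfold sobNorm
  split_ifs with hptop
  · subst hptop
    exact le_max_right _ _
  · have hpr : 0 < p.toReal := ENNReal.toReal_pos hp hptop
    calc eLpNorm g p mu01 = (eLpNorm g p mu01 ^ p.toReal) ^ (1 / p.toReal) := by
          rw [← ENNReal.rpow_mul, mul_one_div_cancel hpr.ne', ENNReal.rpow_one]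
      _ ≤ _ := ENNReal.rpow_le_rpow le_add_self (by positivity)

lemma sobNorm_le_add {p : ℝ≥0∞} (hp : 1 ≤ p) (f g : ℝ → ℝ) :
    sobNorm p f g ≤ eLpNorm f p mu01 + eLpNorm g p mu01 := by
  unfold sobNorm
  split_ifs with hptop
  · subst hptop
    exact max_le le_self_add le_add_self
  · exact ENNReal.rpow_add_rpow_le_add _ _ (by
      simpa using ENNReal.toReal_mono hptop hp)

lemma LipschitzWith.isW11_deriv {f : ℝ → ℝ} {K : ℝ≥0} (hf : LipschitzWith K f) :
    IsW11 f (deriv f) :=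
  ⟨hf.lipschitzOnWith.absolutelyContinuousOnInterval.intervalIntegrable_deriv, fun x _ => by
    rw [hf.lipschitzOnWith.absolutelyContinuousOnInterval.integral_deriv_eq_sub]; ring⟩

section UpperBound

variable {p q : ℝ≥0∞} {n : ℕ} {x : ℕ → ℝ} {ℓ : ℝ} {f g : ℝ → ℝ}

lemma IsW11.enorm_le_of_eq_zero_at_nodes (hW : IsW11 f g) (hp : 1 ≤ p) (hn : 1 ≤ n)
    (hx : MonotoneOn x (Iic (n + 1))) (hx0 : x 0 = 0) (hx1 : x (n + 1) = 1)
    (hgap : ∀ i ≤ n, x (i + 1) - x i ≤ ℓ) (hfz : ∀ i, 1 ≤ i → i ≤ n → f (x i) = 0)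
    {i : ℕ} (hi : i ≤ n) {t : ℝ} (ht : t ∈ Icc (x i) (x (i + 1))) :
    ‖f t‖ₑ ≤ eLpNorm g p (volume.restrict (Ioc (x i) (x (i + 1))))
      * ENNReal.ofReal ℓ ^ (1 - (1 / p).toReal) := by
  have hxle : ∀ {j k}, j ≤ k → k ≤ n + 1 → x j ≤ x k := fun hjk hk =>
    hx (mem_Iic.2 (hjk.trans hk)) (mem_Iic.2 hk) hjk
  have hnode : x (max 1 i) ∈ Icc (x i) (x (i + 1)) := by
    rcases Nat.eq_zero_or_pos i with rfl | hi0
    · exact ⟨hxle (by omega) (by omega), le_rfl⟩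
    · rw [max_eq_right hi0]
      exact ⟨le_rfl, hxle (by omega) (by omega)⟩
  calc ‖f t‖ₑ ≤ eLpNorm g p (volume.restrict (Ioc (x i) (x (i + 1))))
        * ENNReal.ofReal (x (i + 1) - x i) ^ (1 - (1 / p).toReal) :=
        hW.enorm_le_of_eq_zero hp (hx0 ▸ hxle (Nat.zero_le _) (by omega))
          (hx1 ▸ hxle (by omega) le_rfl) hnode ht (hfz _ (le_max_left _ _) (by omega))
    _ ≤ _ := by
        gcongr
        · exact sub_nonneg.2 (one_div_toReal_le_one hp)
        · exact hgap i hi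

lemma eLpNorm_restrict_Ioc_le_mu01 (hx : MonotoneOn x (Iic (n + 1))) (hx0 : x 0 = 0)
    (hx1 : x (n + 1) = 1) {i : ℕ} (hi : i ≤ n) :
    eLpNorm g p (volume.restrict (Ioc (x i) (x (i + 1)))) ≤ eLpNorm g p mu01 := by
  rw [mu01_eq_restrict_Ioc, ← hx0, ← hx1]
  exact eLpNorm_mono_measure _ (Measure.restrict_mono (Ioc_subset_Ioc
    (hx (by simp) (by simp; omega) i.zero_le) (hx (by simp; omega) (by simp) (by omega))) le_rfl)

lemma eLpNorm_top_le_of_eq_zero_at_nodes (hp : 1 ≤ p) (hn : 1 ≤ n)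
    (hx : MonotoneOn x (Iic (n + 1))) (hx0 : x 0 = 0) (hx1 : x (n + 1) = 1)
    (hgap : ∀ i ≤ n, x (i + 1) - x i ≤ ℓ) (hW : IsW11 f g) (hg : eLpNorm g p mu01 ≤ 1)
    (hfz : ∀ i, 1 ≤ i → i ≤ n → f (x i) = 0) :
    eLpNorm f ∞ mu01 ≤ ENNReal.ofReal ℓ ^ (1 - (1 / p).toReal) := by
  have hbound : ∀ t ∈ Ioc (0 : ℝ) 1, ‖f t‖ₑ ≤ ENNReal.ofReal ℓ ^ (1 - (1 / p).toReal) := by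
    intro t ht
    rw [← hx0, ← hx1, ← hx.biUnion_Ioc_range, mem_iUnion₂] at ht
    obtain ⟨i, hi, hti⟩ := ht
    have hi : i ≤ n := Nat.lt_succ_iff.1 (Finset.mem_range.1 hi)
    refine (hW.enorm_le_of_eq_zero_at_nodes hp hn hx hx0 hx1 hgap hfz hi
      (Ioc_subset_Icc_self hti)).trans ?_
    simpa using mul_le_mul_left ((eLpNorm_restrict_Ioc_le_mu01 hx hx0 hx1 hi).trans hg) _
  rw [eLpNorm_exponent_top, mu01_eq_restrict_Ioc]
  exact essSup_le_of_ae_le _ (ae_restrict_of_forall_mem measurableSet_Ioc hbound)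

lemma lintegral_rpow_le_of_eq_zero_at_nodes (hp : 1 ≤ p) (hpq : p ≤ q) (hq : q ≠ ∞) (hn : 1 ≤ n)
    (hx : MonotoneOn x (Iic (n + 1))) (hx0 : x 0 = 0) (hx1 : x (n + 1) = 1)
    (hgap : ∀ i ≤ n, x (i + 1) - x i ≤ ℓ) (hW : IsW11 f g) (hg : eLpNorm g p mu01 ≤ 1)
    (hfz : ∀ i, 1 ≤ i → i ≤ n → f (x i) = 0) :
    ∫⁻ t, ‖f t‖ₑ ^ q.toReal ∂mu01
      ≤ ENNReal.ofReal ℓ ^ ((1 - (1 / p).toReal) * q.toReal + 1) := by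
  set L := ENNReal.ofReal ℓ
  set e := 1 - (1 / p).toReal
  set G := fun i => eLpNorm g p (volume.restrict (Ioc (x i) (x (i + 1))))
  have hp0 : p ≠ 0 := (zero_lt_one.trans_le hp).ne'
  have hptop : p ≠ ∞ := ne_top_of_le_ne_top hq hpq
  have hs : 0 < q.toReal := ENNReal.toReal_pos (zero_lt_one.trans_le (hp.trans hpq)).ne' hq
  have hsumG : ∑ i ∈ Finset.range (n + 1), G i ^ p.toReal ≤ 1 := by
    rw [hx.sum_eLpNorm_Ioc_rpow hp0 hptop, hx0, hx1, ← mu01_eq_restrict_Ioc]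
    exact ENNReal.rpow_le_one hg ENNReal.toReal_nonneg
  have hcell : ∀ i ≤ n, ∫⁻ t in Ioc (x i) (x (i + 1)), ‖f t‖ₑ ^ q.toReal
      ≤ G i ^ p.toReal * L ^ (e * q.toReal + 1) := fun i hi =>
    calc ∫⁻ t in Ioc (x i) (x (i + 1)), ‖f t‖ₑ ^ q.toReal
        ≤ ∫⁻ _ in Ioc (x i) (x (i + 1)), (G i * L ^ e) ^ q.toReal :=
          setLIntegral_mono' measurableSet_Ioc fun t ht => ENNReal.rpow_le_rpow
            (hW.enorm_le_of_eq_zero_at_nodes hp hn hx hx0 hx1 hgap hfz hi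
              (Ioc_subset_Icc_self ht)) hs.le
      _ = G i ^ q.toReal * L ^ (e * q.toReal) * ENNReal.ofReal (x (i + 1) - x i) := by
          rw [setLIntegral_const, Real.volume_Ioc, ENNReal.mul_rpow_of_nonneg _ _ hs.le,
            ← ENNReal.rpow_mul]
      _ ≤ G i ^ p.toReal * L ^ (e * q.toReal) * L := by
          gcongr ?_ * _ * ?_
          · exact ENNReal.rpow_le_rpow_of_exponent_ge
              ((eLpNorm_restrict_Ioc_le_mu01 hx hx0 hx1 hi).trans hg) (ENNReal.toReal_mono hq hpq)
          · exact ENNReal.ofReal_le_ofReal (hgap i hi)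
      _ = G i ^ p.toReal * L ^ (e * q.toReal + 1) := by
          rw [ENNReal.rpow_add_of_nonneg _ _
            (mul_nonneg (sub_nonneg.2 (one_div_toReal_le_one hp)) hs.le) zero_le_one,
            ENNReal.rpow_one, mul_assoc]
  calc ∫⁻ t, ‖f t‖ₑ ^ q.toReal ∂mu01
      = ∑ i ∈ Finset.range (n + 1), ∫⁻ t in Ioc (x i) (x (i + 1)), ‖f t‖ₑ ^ q.toReal := by
        rw [mu01_eq_restrict_Ioc, ← hx0, ← hx1, hx.lintegral_Ioc_eq_sum]
    _ ≤ (∑ i ∈ Finset.range (n + 1), G i ^ p.toReal) * L ^ (e * q.toReal + 1) := by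
        rw [Finset.sum_mul]
        exact Finset.sum_le_sum fun i hi => hcell i (Nat.lt_succ_iff.1 (Finset.mem_range.1 hi))
    _ ≤ L ^ (e * q.toReal + 1) := by simpa using mul_le_mul_left hsumG _

lemma eLpNorm_le_of_eq_zero_at_nodes (hp : 1 ≤ p) (hpq : p ≤ q) (hn : 1 ≤ n)
    (hx : MonotoneOn x (Iic (n + 1))) (hx0 : x 0 = 0) (hx1 : x (n + 1) = 1)
    (hgap : ∀ i ≤ n, x (i + 1) - x i ≤ ℓ) (hW : IsW11 f g) (hg : eLpNorm g p mu01 ≤ 1)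
    (hfz : ∀ i, 1 ≤ i → i ≤ n → f (x i) = 0) :
    eLpNorm f q mu01 ≤ ENNReal.ofReal (ℓ ^ (1 - (1 / p).toReal + (1 / q).toReal)) := by
  have he : 0 ≤ 1 - (1 / p).toReal := sub_nonneg.2 (one_div_toReal_le_one hp)
  have hℓ : 0 ≤ ℓ := (sub_nonneg.2 (hx (by simp) (by simp) zero_le_one)).trans (hgap 0 n.zero_le)
  rcases eq_or_ne q ∞ with rfl | hq
  · rw [one_div ⊤, ENNReal.inv_top, ENNReal.toReal_zero, add_zero,
      ← ENNReal.ofReal_rpow_of_nonneg hℓ he]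
    exact eLpNorm_top_le_of_eq_zero_at_nodes hp hn hx hx0 hx1 hgap hW hg hfz
  have hq0 : q ≠ 0 := (zero_lt_one.trans_le (hp.trans hpq)).ne'
  calc eLpNorm f q mu01 = (∫⁻ t, ‖f t‖ₑ ^ q.toReal ∂mu01) ^ (1 / q.toReal) :=
        eLpNorm_eq_lintegral_rpow_enorm_toReal hq0 hq
    _ ≤ (ENNReal.ofReal ℓ ^ ((1 - (1 / p).toReal) * q.toReal + 1)) ^ (1 / q.toReal) := by
        gcongr
        exact lintegral_rpow_le_of_eq_zero_at_nodes hp hpq hq hn hx hx0 hx1 hgap hW hg hfz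
    _ = ENNReal.ofReal (ℓ ^ (1 - (1 / p).toReal + (1 / q).toReal)) := by
        rw [← ENNReal.rpow_mul, ENNReal.ofReal_rpow_of_nonneg hℓ (by positivity), one_div q,
          ENNReal.toReal_inv]
        congr 2
        field_simp [(ENNReal.toReal_pos hq0 hq).ne']

end UpperBound

def hat (m r t : ℝ) : ℝ := max (r - |t - m|) 0

lemma lipschitzWith_hat (m r : ℝ) : LipschitzWith 1 (hat m r) :=
  LipschitzWith.of_dist_le_mul fun s t => by
    simp only [hat, Real.dist_eq, NNReal.coe_one, one_mul]
    calc |max (r - |s - m|) 0 - max (r - |t - m|) 0| ≤ |(r - |s - m|) - (r - |t - m|)| :=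
          abs_max_sub_max_le_abs _ _ _
      _ = abs (|t - m| - |s - m|) := by ring_nf
      _ ≤ |t - m - (s - m)| := abs_abs_sub_abs_le_abs_sub _ _
      _ = |s - t| := by rw [abs_sub_comm]; ring_nf

lemma hat_eq_zero {m r t : ℝ} (h : r ≤ |t - m|) : hat m r t = 0 :=
  max_eq_right (by linarith)

lemma hat_nonneg (m r t : ℝ) : 0 ≤ hat m r t :=
  le_max_right _ _

lemma hat_le {m r : ℝ} (hr : 0 ≤ r) (t : ℝ) : hat m r t ≤ r :=
  max_le (by linarith [abs_nonneg (t - m)]) hr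

lemma le_hat {m r t : ℝ} (h : |t - m| ≤ r / 2) : r / 2 ≤ hat m r t :=
  le_max_of_le_left (by linarith)

lemma deriv_hat_eq_zero {m r t : ℝ} (h : r < |t - m|) : deriv (hat m r) t = 0 := by
  have hzero : hat m r =ᶠ[nhds t] fun _ => 0 := by
    have hopen : IsOpen {s : ℝ | r < |s - m|} := isOpen_lt continuous_const (by fun_prop)
    filter_upwards [hopen.mem_nhds h] with s hs using hat_eq_zero hs.le
  rw [hzero.deriv_eq, deriv_const]

lemma eLpNorm_deriv_hat_le (m r : ℝ) (p : ℝ≥0∞) :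
    eLpNorm (deriv (hat m r)) p volume ≤ ENNReal.ofReal (2 * r) ^ (1 / p.toReal) := by
  have hbound :
      ∀ t, ‖deriv (hat m r) t‖ ≤ ‖(Icc (m - r) (m + r)).indicator (fun _ => (1 : ℝ)) t‖ := by
    intro t
    by_cases ht : t ∈ Icc (m - r) (m + r)
    · simpa [indicator_of_mem ht] using norm_deriv_le_of_lipschitz (lipschitzWith_hat m r)
    · have hlt : r < |t - m| := by
        rw [mem_Icc, not_and_or, not_le, not_le] at ht
        rw [lt_abs]; rcases ht with ht | ht
        · right; linarith
        · left; linarith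
      simp [deriv_hat_eq_zero hlt]
  calc eLpNorm (deriv (hat m r)) p volume
      ≤ eLpNorm ((Icc (m - r) (m + r)).indicator fun _ => (1 : ℝ)) p volume := eLpNorm_mono hbound
    _ ≤ ‖(1 : ℝ)‖ₑ * volume (Icc (m - r) (m + r)) ^ (1 / p.toReal) := eLpNorm_indicator_const_le _ _
    _ = ENNReal.ofReal (2 * r) ^ (1 / p.toReal) := by
        rw [Real.volume_Icc, enorm_one, one_mul]; ring_nf

lemma ofReal_mul_rpow_le_eLpNorm_hat {m r : ℝ} {q : ℝ≥0∞} (hq : q ≠ 0) (hr : 0 < r)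
    (hsub : Icc (m - r / 2) (m + r / 2) ⊆ Icc 0 1) :
    ENNReal.ofReal (r / 2) * ENNReal.ofReal r ^ (1 / q.toReal) ≤ eLpNorm (hat m r) q mu01 := by
  have hvol : mu01 (Icc (m - r / 2) (m + r / 2)) = ENNReal.ofReal r := by
    rw [mu01, Measure.restrict_eq_self _ hsub, Real.volume_Icc]; ring_nf
  have hbound :
      ∀ t, ‖(Icc (m - r / 2) (m + r / 2)).indicator (fun _ => r / 2) t‖ ≤ ‖hat m r t‖ := by
    intro t
    by_cases ht : t ∈ Icc (m - r / 2) (m + r / 2)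
    · have hle : r / 2 ≤ hat m r t :=
        le_hat (abs_sub_le_iff.2 ⟨by linarith [ht.2], by linarith [ht.1]⟩)
      rw [indicator_of_mem ht, Real.norm_of_nonneg (by linarith),
        Real.norm_of_nonneg (by linarith)]
      exact hle
    · simp [indicator_of_notMem ht]
  calc ENNReal.ofReal (r / 2) * ENNReal.ofReal r ^ (1 / q.toReal)
      = eLpNorm ((Icc (m - r / 2) (m + r / 2)).indicator fun _ => r / 2) q mu01 := by
        rw [eLpNorm_indicator_const' measurableSet_Icc (by simp [hvol, hr]) hq, hvol,
          Real.enorm_of_nonneg (by linarith)]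
    _ ≤ eLpNorm (hat m r) q mu01 := eLpNorm_mono hbound

noncomputable def scaledHat (p : ℝ≥0∞) (m ℓ : ℝ) : ℝ → ℝ :=
  (ℓ ^ (-(1 / p).toReal) / 2) • hat m (ℓ / 2)

lemma isW11_scaledHat (p : ℝ≥0∞) (m ℓ : ℝ) :
    IsW11 (scaledHat p m ℓ) (deriv (scaledHat p m ℓ)) :=
  ((lipschitzWith_smul (ℓ ^ (-(1 / p).toReal) / 2)).comp (lipschitzWith_hat m (ℓ / 2))).isW11_deriv

lemma scaledHat_eq_zero {p : ℝ≥0∞} {m ℓ t : ℝ} (h : ℓ / 2 ≤ |t - m|) : scaledHat p m ℓ t = 0 := by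
  simp [scaledHat, hat_eq_zero h]

lemma sobNorm_scaledHat_le_one {p : ℝ≥0∞} (hp : 1 ≤ p) {ℓ : ℝ} (hℓ0 : 0 < ℓ) (hℓ1 : ℓ ≤ 1)
    (m : ℝ) : sobNorm p (scaledHat p m ℓ) (deriv (scaledHat p m ℓ)) ≤ 1 := by
  set e := (1 / p).toReal
  set β : ℝ := ℓ ^ (-e) / 2 with hβ
  have hβ0 : 0 ≤ β := by positivity
  have hderiv : deriv (scaledHat p m ℓ) = β • deriv (hat m (ℓ / 2)) :=
    funext fun t => deriv_const_smul_field _ _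
  have hf : eLpNorm (hat m (ℓ / 2)) p mu01 ≤ ENNReal.ofReal (ℓ / 2) := by
    refine (eLpNorm_le_of_ae_bound (C := ℓ / 2) (ae_of_all _ fun t => ?_)).trans_eq ?_
    · rw [Real.norm_of_nonneg (hat_nonneg _ _ _)]
      exact hat_le (by positivity) t
    · rw [mu01_univ, ENNReal.one_rpow, one_mul]
  have hg : eLpNorm (deriv (hat m (ℓ / 2))) p mu01 ≤ ENNReal.ofReal ℓ ^ e := by
    have h := eLpNorm_deriv_hat_le m (ℓ / 2) p
    rw [mul_div_cancel₀ ℓ two_ne_zero, one_div, ← ENNReal.toReal_inv, ← one_div] at h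
    exact (eLpNorm_mono_measure _ Measure.restrict_le_self).trans h
  calc sobNorm p (scaledHat p m ℓ) (deriv (scaledHat p m ℓ))
      ≤ ‖β‖ₑ * eLpNorm (hat m (ℓ / 2)) p mu01 + ‖β‖ₑ * eLpNorm (deriv (hat m (ℓ / 2))) p mu01 := by
        rw [← eLpNorm_const_smul, ← eLpNorm_const_smul, ← hderiv]
        exact sobNorm_le_add hp _ _
    _ ≤ ENNReal.ofReal β * ENNReal.ofReal (ℓ / 2) + ENNReal.ofReal β * ENNReal.ofReal ℓ ^ e := by
        rw [Real.enorm_of_nonneg hβ0]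
        gcongr
    _ = ENNReal.ofReal (ℓ ^ (1 - e) / 4 + 1 / 2) := by
        rw [ENNReal.ofReal_rpow_of_pos hℓ0, ← ENNReal.ofReal_mul hβ0, ← ENNReal.ofReal_mul hβ0,
          ← ENNReal.ofReal_add (by positivity) (by positivity)]
        congr 1
        rw [hβ, Real.rpow_sub hℓ0, Real.rpow_one, Real.rpow_neg hℓ0.le]
        field_simp
        ring
    _ ≤ 1 := ENNReal.ofReal_le_one.2 (by
        linarith [Real.rpow_le_one hℓ0.le hℓ1 (sub_nonneg.2 (one_div_toReal_le_one hp))])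

lemma ofReal_le_eLpNorm_scaledHat (p : ℝ≥0∞) {q : ℝ≥0∞} (hq : 1 ≤ q) {m ℓ : ℝ} (hℓ0 : 0 < ℓ)
    (hsub : Icc (m - ℓ / 4) (m + ℓ / 4) ⊆ Icc 0 1) :
    ENNReal.ofReal (1 / 16 * ℓ ^ (1 - (1 / p).toReal + (1 / q).toReal))
      ≤ eLpNorm (scaledHat p m ℓ) q mu01 := by
  set e := (1 / p).toReal
  set s := (1 / q).toReal with hs
  have hqs : 1 / q.toReal = s := by rw [hs, one_div, one_div, ENNReal.toReal_inv]
  have h2s : (2 : ℝ) ^ s ≤ 2 :=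
    (Real.rpow_le_rpow_of_exponent_le one_le_two (one_div_toReal_le_one hq)).trans_eq
      (Real.rpow_one 2)
  have hhat := ofReal_mul_rpow_le_eLpNorm_hat (m := m) (zero_lt_one.trans_le hq).ne'
    (half_pos hℓ0) (by convert hsub using 3 <;> ring)
  rw [scaledHat, eLpNorm_const_smul, Real.enorm_of_nonneg (by positivity)]
  refine le_trans ?_ (mul_le_mul' le_rfl hhat)
  rw [ENNReal.ofReal_rpow_of_pos (half_pos hℓ0), hqs, ← ENNReal.ofReal_mul (by positivity),
    ← ENNReal.ofReal_mul (by positivity)]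
  refine ENNReal.ofReal_le_ofReal ?_
  rw [Real.rpow_add hℓ0, Real.rpow_sub hℓ0, Real.rpow_one, Real.rpow_neg hℓ0.le,
    Real.div_rpow hℓ0.le zero_le_two]
  have hX : 0 < ℓ ^ e := by positivity
  have hY : 0 < ℓ ^ s := by positivity
  have hZ : 0 < (2 : ℝ) ^ s := by positivity
  field_simp
  nlinarith [mul_pos (mul_pos hX hY) hℓ0]

lemma ofReal_le_sobRadius_of_gap {p q : ℝ≥0∞} (hp : 1 ≤ p) (hq : 1 ≤ q) {n : ℕ} {x : ℕ → ℝ}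
    {a b : ℝ} (ha : 0 ≤ a) (hab : a < b) (hb : b ≤ 1)
    (hx : ∀ i, 1 ≤ i → i ≤ n → x i ∉ Ioo a b) :
    ENNReal.ofReal (1 / 16 * (b - a) ^ (1 - (1 / p).toReal + (1 / q).toReal))
      ≤ sobRadius p q n x := by
  set f := scaledHat p ((a + b) / 2) (b - a)
  have hfz : ∀ i, 1 ≤ i → i ≤ n → f (x i) = 0 := fun i h1 h2 => by
    refine scaledHat_eq_zero ?_
    rcases not_and_or.1 (hx i h1 h2) with h | h <;> rw [le_abs] <;> [right; left] <;>
      linarith [not_lt.1 h]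
  calc ENNReal.ofReal (1 / 16 * (b - a) ^ (1 - (1 / p).toReal + (1 / q).toReal))
      ≤ eLpNorm f q mu01 :=
        ofReal_le_eLpNorm_scaledHat p hq (sub_pos.2 hab)
          (Icc_subset_Icc (by linarith) (by linarith))
    _ ≤ sobRadius p q n x :=
        le_iSup_of_le f <| le_iSup_of_le (deriv f) <| le_iSup_of_le
          ⟨isW11_scaledHat _ _ _, sobNorm_scaledHat_le_one hp (sub_pos.2 hab) (by linarith) _, hfz⟩
          le_rfl

theorem stmt0 (p q : ℝ≥0∞) (hp : 1 ≤ p) (hpq : p ≤ q) :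
    ∃ c C : ℝ, 0 < c ∧ 0 < C ∧
      ∀ n : ℕ, 1 ≤ n → ∀ x : ℕ → ℝ,
        x 0 = 0 → x (n+1) = 1 → (∀ i ≤ n, x i ≤ x (i+1)) →
        ∀ ℓ : ℝ,
          ℓ = (Finset.range (n+1)).sup'
                (Finset.nonempty_range_iff.mpr (Nat.succ_ne_zero n))
                (fun i => x (i+1) - x i) →
          ENNReal.ofReal (c * ℓ ^ (1 - (1/p).toReal + (1/q).toReal))
              ≤ sobRadius p q n x ∧
            sobRadius p q n x
              ≤ ENNReal.ofReal (C * ℓ ^ (1 - (1/p).toReal + (1/q).toReal)) := by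
  refine ⟨1 / 16, 1, by norm_num, one_pos, fun n hn x hx0 hx1 hstep ℓ hℓ => ?_⟩
  have hx : MonotoneOn x (Iic (n + 1)) :=
    monotoneOn_of_le_succ ordConnected_Iic fun i _ _ hi => hstep i (by simpa using hi)
  have hgap : ∀ i ≤ n, x (i + 1) - x i ≤ ℓ := fun i hi =>
    hℓ ▸ Finset.le_sup' (fun i => x (i + 1) - x i) (Finset.mem_range.2 (Nat.lt_succ_of_le hi))
  obtain ⟨j, hj, hjℓ⟩ := Finset.exists_mem_eq_sup'
    (Finset.nonempty_range_iff.mpr (Nat.succ_ne_zero n)) (fun i => x (i + 1) - x i)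
  have hjn : j < n + 1 := Finset.mem_range.1 hj
  have hℓj : x (j + 1) - x j = ℓ := (hℓ.trans hjℓ).symm
  have hℓ0 : 0 < ℓ := pos_of_forall_succ_sub_le (by rw [hx0, hx1]; exact one_pos) hgap
  constructor
  · rw [← hℓj]
    exact ofReal_le_sobRadius_of_gap hp (hp.trans hpq)
      (hx0 ▸ hx (by simp) (by simp; omega) j.zero_le) (by linarith)
      (hx1 ▸ hx (by simp; omega) (by simp) (by omega))
      fun i _ hin => hx.notMem_Ioo_succ (by omega) hjn
  · refine iSup_le fun f => iSup_le fun g => iSup_le fun ⟨hW, hsob, hfz⟩ => ?_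
    rw [one_mul]
    exact eLpNorm_le_of_eq_zero_at_nodes hp hpq hn hx hx0 hx1 hgap hW
      ((eLpNorm_le_sobNorm_right (zero_lt_one.trans_le hp).ne' f g).trans hsob) hfz
end

section
/- Let 1 ≤ q < p ≤ ∞ and define s > 0 by 1/s = 1/q − 1/p. Let n ≥ 1 and let 0 = x_0 ≤ x_1 ≤ … ≤ x_n ≤ x_{n+1} = 1, with ℓ_i = x_{i+1} − x_i for 0 ≤ i ≤ n. Then every f ∈ W^1_p([0,1]) with f(x_i) = 0 for all 1 ≤ i ≤ n satisfies ‖f‖_{L_q([0,1])} ≤ (Σ_{i=0}^n ℓ_i^{s+1})^{1/s} · ‖f′‖_{L_p([0,1])}. -/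
open MeasureTheory Set
open scoped ENNReal

/-!
On each cell `[x i, x (i+1)]` the function `f` has a zero (`x 1` for the first cell, `x i` for
the others), so there `|f| ≤ ‖g‖_{L_1(cell)} ≤ ℓ_i ^ (1 - 1/p) ‖g‖_{L_p(cell)}`, whence
`‖f‖_{L_q(cell)} ≤ ℓ_i ^ (1 + 1/s) ‖g‖_{L_p(cell)}`. The `L_q` norm of `f` is the `ℓ^q` norm of
its cell norms; since `1/q = 1/s + 1/p`, Hölder's inequality for the counting measure bounds it by
`(∑ ℓ_i ^ (s+1)) ^ (1/s)` times the `ℓ^p` norm of the cell norms of `g`, which is at most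
`‖g‖_{L_p}`.
-/

lemma monotoneOn_Iic_of_le_add_one {x : ℕ → ℝ} {n : ℕ} (h : ∀ i < n, x i ≤ x (i + 1)) :
    MonotoneOn x (Iic n) :=
  monotoneOn_of_le_succ ordConnected_Iic fun i _ _ hi ↦ by
    rw [Order.succ_eq_add_one] at hi ⊢
    exact h i hi

lemma sum_range_sub_rpow_pos {x : ℕ → ℝ} {m : ℕ} (hx : MonotoneOn x (Iic m)) (hlt : x 0 < x m)
    (r : ℝ) : 0 < ∑ i ∈ Finset.range m, (x (i + 1) - x i) ^ r := by
  obtain ⟨i, hi, hpos⟩ : ∃ i ∈ Finset.range m, (0 : ℝ) < x (i + 1) - x i :=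
    Finset.exists_lt_of_sum_lt (by rw [Finset.sum_const_zero, Finset.sum_range_sub]; linarith)
  refine Finset.sum_pos' (fun j hj ↦ Real.rpow_nonneg (sub_nonneg.2 ?_) _)
    ⟨i, hi, Real.rpow_pos_of_pos hpos _⟩
  have hj := Finset.mem_range.1 hj
  exact hx (mem_Iic.2 hj.le) (mem_Iic.2 hj) j.le_succ

lemma ENNReal.holderTriple_ofReal {p q : ℝ≥0∞} {s : ℝ} (hs : 0 < s) (hq : q ≠ 0) (hqp : q ≤ p)
    (h : 1 / s = (1 / q).toReal - (1 / p).toReal) :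
    ENNReal.HolderTriple (ENNReal.ofReal s) p q := by
  have hpq : p⁻¹ ≤ q⁻¹ := ENNReal.inv_le_inv.2 hqp
  have hq' : q⁻¹ ≠ ∞ := ENNReal.inv_ne_top.2 hq
  refine ⟨?_⟩
  rw [← ENNReal.ofReal_inv_of_pos hs, ← one_div, h, one_div, one_div,
    ← ENNReal.toReal_sub_of_le hpq hq', ENNReal.ofReal_toReal (ENNReal.sub_ne_top hq'),
    tsub_add_cancel_of_le hpq]

namespace MeasureTheory

lemma Measure.restrict_Icc_eq_sum_restrict_Icc {μ : Measure ℝ} [NullSingletonClass μ]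
    {x : ℕ → ℝ} {m : ℕ} (hx : MonotoneOn x (Iic m)) :
    μ.restrict (Icc (x 0) (x m)) = ∑ i ∈ Finset.range m, μ.restrict (Icc (x i) (x (i + 1))) := by
  induction m with
  | zero => simp
  | succ m ih =>
    have h0m : x 0 ≤ x m := hx (by simp) (by simp) m.zero_le
    have hmm : x m ≤ x (m + 1) := hx (by simp) (by simp) m.le_succ
    rw [Finset.sum_range_succ, ← ih (hx.mono (Iic_subset_Iic.2 m.le_succ)),
      ← Icc_union_Icc_eq_Icc h0m hmm, Measure.restrict_union₀ _ measurableSet_Icc.nullMeasurableSet]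
    rw [AEDisjoint, Icc_inter_Icc_eq_singleton h0m hmm, measure_singleton]

section SumMeasure

variable {α ι ε : Type*} [MeasurableSpace α] [Fintype ι] [MeasurableSpace ι]
  [MeasurableSingletonClass ι] [TopologicalSpace ε] [ContinuousENorm ε]

lemma eLpNorm_sum_measure {p : ℝ≥0∞} (hp : p ≠ ∞) (f : α → ε) (μ : ι → Measure α) :
    eLpNorm f p (∑ i, μ i) = eLpNorm (fun i ↦ eLpNorm f p (μ i)) p .count := by
  rcases eq_or_ne p 0 with rfl | hp0
  · simp
  simp_rw [eLpNorm_eq_lintegral_rpow_enorm_toReal hp0 hp, lintegral_finsetSum_measure,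
    lintegral_count, tsum_fintype, enorm_eq_self, one_div,
    ENNReal.rpow_inv_rpow (ENNReal.toReal_pos hp0 hp).ne']

lemma eLpNorm_count_le_eLpNorm_sum_measure (p : ℝ≥0∞) (f : α → ε) (μ : ι → Measure α) :
    eLpNorm (fun i ↦ eLpNorm f p (μ i)) p .count ≤ eLpNorm f p (∑ i, μ i) := by
  rcases eq_or_ne p ∞ with rfl | hp
  · rw [eLpNorm_exponent_top, eLpNormEssSup_count]
    refine iSup_le fun i ↦ ?_
    rw [enorm_eq_self, ← Measure.sum_fintype]
    exact eLpNorm_mono_measure f (Measure.le_sum μ i)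
  · exact (eLpNorm_sum_measure hp f μ).ge

end SumMeasure

lemma eLpNorm_count_le_of_le_rpow_mul {ι : Type*} [Fintype ι] [MeasurableSpace ι]
    [MeasurableSingletonClass ι] {p q : ℝ≥0∞} {s : ℝ} (hs : 0 < s)
    [ENNReal.HolderTriple (ENNReal.ofReal s) p q] {F G : ι → ℝ≥0∞} {ℓ : ι → ℝ}
    (hℓ : ∀ i, 0 ≤ ℓ i) (hG : ∀ i, G i ≠ ∞)
    (hF : ∀ i, F i ≤ ENNReal.ofReal (ℓ i) ^ (1 + 1 / s) * G i) :
    eLpNorm F q .count ≤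
      ENNReal.ofReal ((∑ i, ℓ i ^ (s + 1)) ^ (1 / s)) * eLpNorm G p .count := by
  set a : ι → ℝ := fun i ↦ ℓ i ^ (1 + 1 / s)
  have ha0 i : 0 ≤ a i := Real.rpow_nonneg (hℓ i) _
  have hℓs i : 0 ≤ ℓ i ^ (s + 1) := Real.rpow_nonneg (hℓ i) _
  have ha : eLpNorm a (ENNReal.ofReal s) .count =
      ENNReal.ofReal ((∑ i, ℓ i ^ (s + 1)) ^ (1 / s)) := by
    rw [eLpNorm_eq_lintegral_rpow_enorm_toReal (by simpa) ENNReal.ofReal_ne_top,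
      ENNReal.toReal_ofReal hs.le, lintegral_count, tsum_fintype,
      ← ENNReal.ofReal_rpow_of_nonneg (Finset.sum_nonneg fun i _ ↦ hℓs i) (by positivity),
      ENNReal.ofReal_sum_of_nonneg fun i _ ↦ hℓs i]
    congr 2 with i
    rw [Real.enorm_eq_ofReal (ha0 i), ENNReal.ofReal_rpow_of_nonneg (ha0 i) hs.le,
      ← Real.rpow_mul (hℓ i)]
    congr 2
    field_simp
  calc eLpNorm F q .count ≤ eLpNorm (a • fun i ↦ (G i).toReal) q .count :=
        eLpNorm_mono_enorm fun i ↦ by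
          rw [enorm_eq_self, Pi.smul_apply', smul_eq_mul, enorm_mul, Real.enorm_eq_ofReal (ha0 i),
            Real.enorm_eq_ofReal ENNReal.toReal_nonneg, ENNReal.ofReal_toReal (hG i),
            ← ENNReal.ofReal_rpow_of_nonneg (hℓ i) (by positivity)]
          exact hF i
    _ ≤ eLpNorm a (ENNReal.ofReal s) .count * eLpNorm (fun i ↦ (G i).toReal) p .count :=
        eLpNorm_smul_le_mul_eLpNorm .of_discrete .of_discrete
    _ ≤ _ := by
        rw [ha]
        gcongr
        exact eLpNorm_mono_enorm fun i ↦ by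
          rw [enorm_eq_self, Real.enorm_eq_ofReal ENNReal.toReal_nonneg]
          exact ENNReal.ofReal_toReal_le

lemma eLpNorm_restrict_Icc_le_of_eq_intervalIntegral {f g : ℝ → ℝ} {a b z : ℝ} {p q : ℝ≥0∞}
    (hp : 1 ≤ p) (hg : AEStronglyMeasurable g (volume.restrict (Icc a b))) (hz : z ∈ Icc a b)
    (hf : ∀ t ∈ Icc a b, f t = ∫ u in z..t, g u) :
    eLpNorm f q (volume.restrict (Icc a b)) ≤
      ENNReal.ofReal (b - a) ^ (q.toReal⁻¹ + (1 - p.toReal⁻¹)) *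
        eLpNorm g p (volume.restrict (Icc a b)) := by
  set μ := volume.restrict (Icc a b)
  have hμ : μ univ = ENNReal.ofReal (b - a) := by simp [μ]
  have hsup : ∀ t ∈ Icc a b, ‖f t‖ₑ ≤ eLpNorm g 1 μ := fun t ht ↦ by
    rw [hf t ht, eLpNorm_one_eq_lintegral_enorm, ← ofReal_norm,
      intervalIntegral.norm_integral_eq_norm_integral_uIoc, ofReal_norm]
    exact (enorm_integral_le_lintegral_enorm _).trans
      (lintegral_mono_set (uIoc_subset_uIcc.trans (uIcc_subset_Icc hz ht)))
  have hL1 : eLpNorm g 1 μ ≤ eLpNorm g p μ * ENNReal.ofReal (b - a) ^ (1 - p.toReal⁻¹) := by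
    simpa [hμ] using eLpNorm_le_eLpNorm_mul_rpow_measure_univ hp hg
  have hp_inv : p.toReal⁻¹ ≤ 1 := by
    rw [← ENNReal.toReal_inv]
    exact ENNReal.toReal_le_of_le_ofReal zero_le_one (by simpa using ENNReal.inv_le_one.2 hp)
  calc eLpNorm f q μ ≤ eLpNorm g 1 μ • μ univ ^ q.toReal⁻¹ :=
        eLpNorm_le_of_ae_enorm_bound (ae_restrict_of_forall_mem measurableSet_Icc hsup)
    _ ≤ eLpNorm g p μ * ENNReal.ofReal (b - a) ^ (1 - p.toReal⁻¹) *
          ENNReal.ofReal (b - a) ^ q.toReal⁻¹ := by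
        rw [hμ, smul_eq_mul]
        gcongr
    _ = _ := by
        rw [ENNReal.rpow_add_of_nonneg _ _ (by positivity) (by linarith)]
        ring

end MeasureTheory

lemma IsW11.eq_intervalIntegral_of_eq_zero {f g : ℝ → ℝ} (hfg : IsW11 f g) {z t : ℝ}
    (hz : z ∈ Icc 0 1) (ht : t ∈ Icc 0 1) (hfz : f z = 0) : f t = ∫ u in z..t, g u := by
  have hint : ∀ y ∈ Icc (0 : ℝ) 1, IntervalIntegrable g volume 0 y := fun y hy ↦
    hfg.1.mono_set (uIcc_subset_uIcc left_mem_uIcc (Icc_subset_uIcc hy))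
  rw [← intervalIntegral.integral_interval_sub_left (hint t ht) (hint z hz), hfg.2 t ht]
  linarith [hfg.2 z hz]

lemma IsW11.eLpNorm_restrict_Icc_le {f g : ℝ → ℝ} (hfg : IsW11 f g) {p q : ℝ≥0∞} (hp : 1 ≤ p)
    {a b z : ℝ} (hab : Icc a b ⊆ Icc 0 1) (hz : z ∈ Icc a b) (hfz : f z = 0) :
    eLpNorm f q (volume.restrict (Icc a b)) ≤
      ENNReal.ofReal (b - a) ^ (q.toReal⁻¹ + (1 - p.toReal⁻¹)) *
        eLpNorm g p (volume.restrict (Icc a b)) :=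
  eLpNorm_restrict_Icc_le_of_eq_intervalIntegral hp
    (((intervalIntegrable_iff_integrableOn_Icc_of_le zero_le_one).1 hfg.1).mono_set
      hab).aestronglyMeasurable hz
    fun _ ht ↦ hfg.eq_intervalIntegral_of_eq_zero (hab hz) (hab ht) hfz

lemma mu01_eq_sum_restrict_Icc {x : ℕ → ℝ} {n : ℕ} (hx : MonotoneOn x (Iic (n + 1)))
    (hx0 : x 0 = 0) (hx1 : x (n + 1) = 1) :
    mu01 = ∑ i : Fin (n + 1), volume.restrict (Icc (x i) (x (i + 1))) := by
  rw [mu01, ← hx0, ← hx1, Measure.restrict_Icc_eq_sum_restrict_Icc hx,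
    ← Fin.sum_univ_eq_sum_range (fun i ↦ volume.restrict (Icc (x i) (x (i + 1))))]

theorem stmt3 (p q : ℝ≥0∞) (hq : 1 ≤ q) (hqp : q < p) (s : ℝ) (hs : 0 < s)
    (hs' : 1 / s = (1/q).toReal - (1/p).toReal)
    (n : ℕ) (hn : 1 ≤ n) (x : ℕ → ℝ)
    (hx0 : x 0 = 0) (hx1 : x (n+1) = 1) (hmono : ∀ i ≤ n, x i ≤ x (i+1))
    (f g : ℝ → ℝ) (hfg : IsW11 f g)
    (hzero : ∀ i, 1 ≤ i → i ≤ n → f (x i) = 0) :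
    eLpNorm f q mu01
      ≤ ENNReal.ofReal ((∑ i ∈ Finset.range (n+1), (x (i+1) - x i) ^ (s+1)) ^ (1/s))
          * eLpNorm g p mu01 := by
  have hx : MonotoneOn x (Iic (n + 1)) :=
    monotoneOn_Iic_of_le_add_one fun i hi ↦ hmono i (by omega)
  have hxle {a b : ℕ} (hab : a ≤ b) (hb : b ≤ n + 1) : x a ≤ x b :=
    hx (mem_Iic.2 (hab.trans hb)) (mem_Iic.2 hb) hab
  rcases eq_or_ne (eLpNorm g p mu01) ∞ with hg | hg
  · have hsum := sum_range_sub_rpow_pos hx (by rw [hx0, hx1]; exact one_pos) (s + 1)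
    rw [hg, ENNReal.mul_top (ENNReal.ofReal_pos.2 (Real.rpow_pos_of_pos hsum _)).ne']
    exact le_top
  set μ : Fin (n + 1) → Measure ℝ := fun i ↦ volume.restrict (Icc (x i) (x (i + 1)))
  have hmu01 : mu01 = ∑ i, μ i := mu01_eq_sum_restrict_Icc hx hx0 hx1
  have hI (i : Fin (n + 1)) : Icc (x i) (x (i + 1)) ⊆ Icc 0 1 := by
    rw [← hx0, ← hx1]
    exact Icc_subset_Icc (hxle i.val.zero_le (by omega)) (hxle (by omega) le_rfl)
  have hlocal (i : Fin (n + 1)) :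
      eLpNorm f q (μ i) ≤ ENNReal.ofReal (x (i + 1) - x i) ^ (1 + 1 / s) * eLpNorm g p (μ i) := by
    have hexp : q.toReal⁻¹ + (1 - p.toReal⁻¹) = 1 + 1 / s := by
      rw [hs', one_div, one_div, ENNReal.toReal_inv, ENNReal.toReal_inv]
      ring
    set j := max (i : ℕ) 1
    have hz : x j ∈ Icc (x i) (x (i + 1)) :=
      ⟨hxle (le_max_left _ _) (by omega), hxle (max_le (by omega) (by omega)) (by omega)⟩
    rw [← hexp]
    exact hfg.eLpNorm_restrict_Icc_le (hq.trans hqp.le) (hI i) hz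
      (hzero j (le_max_right _ _) (max_le (by omega) hn))
  have := ENNReal.holderTriple_ofReal hs (zero_lt_one.trans_le hq).ne' hqp.le hs'
  calc eLpNorm f q mu01 = eLpNorm (fun i ↦ eLpNorm f q (μ i)) q .count := by
        rw [hmu01, eLpNorm_sum_measure hqp.ne_top]
    _ ≤ ENNReal.ofReal ((∑ i : Fin (n + 1), (x (i + 1) - x i) ^ (s + 1)) ^ (1 / s)) *
          eLpNorm (fun i ↦ eLpNorm g p (μ i)) p .count :=
        eLpNorm_count_le_of_le_rpow_mul hs (fun i ↦ sub_nonneg.2 (hxle (by omega) (by omega)))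
          (fun i ↦ ne_top_of_le_ne_top hg
            (eLpNorm_mono_measure g (Measure.restrict_mono (hI i) le_rfl))) hlocal
    _ ≤ _ := by
        rw [Fin.sum_univ_eq_sum_range (fun i ↦ (x (i + 1) - x i) ^ (s + 1)), hmu01]
        gcongr
        exact eLpNorm_count_le_eLpNorm_sum_measure p g μ
end

section
/- Let X_1,…,X_n be independent random variables uniformly distributed on [0,1] (n ≥ 2) and let L_n denote the maximal spacing, i.e., the length of the largest of the n+1 intervals into which the points X_1,…,X_n partition [0,1]. Then there exist absolute constants c, C > 0 such that c · log(n)/n ≤ E[L_n] ≤ C · log(n)/n. -/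
/-!
Cut `[0, 1]` into cells `[k t, (k + 1) t)`. A given cell is missed by all `n` points with
probability `(1 - t)^n ≈ exp (-n t)`, and two given cells with probability
`(1 - 2t)^n ≤ (1 - t)^(2n)`.

Upper bound: with `t = 2 log n / n` a union bound shows that, outside an event of probability
`≤ (1 / t) n⁻² ≪ log n / n`, every cell is hit, and then every spacing is `≤ 2t`.

Lower bound: with `t = log n / (4n)` and `p = (1 - t)^n ≥ n^(-1/2)`, take `m ≈ 1 / p` cells.
Bonferroni's inequality gives probability `≥ m p - (m p)^2 / 2 ≥ 1 / 14` that one of them is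
empty, and an empty cell forces a spacing `≥ t`.
-/

open MeasureTheory Set
open scoped ENNReal

/-- The sorted list `0 ≤ X_{(1)} ≤ … ≤ X_{(n)} ≤ 1` of the points together with the
endpoints `0` and `1` of the unit interval. -/
noncomputable def sortedWithEndpoints (n : ℕ) (X : Fin n → ℝ) : List ℝ :=
  (0:ℝ) :: (Multiset.sort (Multiset.ofList (List.ofFn X)) (· ≤ ·) ++ [1])

/-- The `i`-th spacing (`0 ≤ i ≤ n`) induced by the points `X_1, …, X_n` in `[0,1]`. -/
noncomputable def spacing (n : ℕ) (X : Fin n → ℝ) (i : ℕ) : ℝ :=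
  (sortedWithEndpoints n X).getD (i+1) 0 - (sortedWithEndpoints n X).getD i 0

/-- The maximal spacing induced by the points `X_1, …, X_n` in `[0,1]`, i.e. the length
of the largest of the `n+1` intervals into which the points partition `[0,1]`. -/
noncomputable def maxSpacing (n : ℕ) (X : Fin n → ℝ) : ℝ :=
  (Finset.range (n+1)).sup'
    (Finset.nonempty_range_iff.mpr (Nat.succ_ne_zero n)) (spacing n X)

noncomputable def orderStatistics (n : ℕ) (X : Fin n → ℝ) : List ℝ :=
  Multiset.sort (Multiset.ofList (List.ofFn X)) (· ≤ ·)

section OrderStatistics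

variable {n : ℕ} {X : Fin n → ℝ}

lemma length_orderStatistics : (orderStatistics n X).length = n := by
  simp [orderStatistics]

lemma pairwise_orderStatistics : (orderStatistics n X).Pairwise (· ≤ ·) :=
  Multiset.pairwise_sort _ _

lemma mem_orderStatistics {y : ℝ} : y ∈ orderStatistics n X ↔ ∃ j, X j = y := by
  simp [orderStatistics, List.mem_ofFn]

lemma orderStatistics_perm : (orderStatistics n X).Perm (List.ofFn X) :=
  Multiset.coe_eq_coe.1 (Multiset.sort_eq _ _)

lemma sortedWithEndpoints_eq :
    sortedWithEndpoints n X = 0 :: (orderStatistics n X ++ [1]) := rfl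

lemma length_sortedWithEndpoints : (sortedWithEndpoints n X).length = n + 2 := by
  simp [sortedWithEndpoints_eq, length_orderStatistics]

lemma getD_sortedWithEndpoints_zero : (sortedWithEndpoints n X).getD 0 0 = 0 := rfl

lemma getD_sortedWithEndpoints_last : (sortedWithEndpoints n X).getD (n + 1) 0 = 1 := by
  simp [sortedWithEndpoints_eq, length_orderStatistics]

lemma getD_sortedWithEndpoints_succ {k : ℕ} (hk : k < n) :
    (sortedWithEndpoints n X).getD (k + 1) 0 = (orderStatistics n X).getD k 0 := by
  simp [sortedWithEndpoints_eq, List.getD_eq_getElem?_getD,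
    List.getElem?_append_left (length_orderStatistics (X := X) ▸ hk)]

lemma exists_getD_sortedWithEndpoints_eq {i : ℕ} (h1 : 1 ≤ i) (hn : i ≤ n) :
    ∃ j, (sortedWithEndpoints n X).getD i 0 = X j := by
  obtain ⟨k, rfl⟩ : ∃ k, i = k + 1 := ⟨i - 1, by omega⟩
  have hk : k < (orderStatistics n X).length := by rw [length_orderStatistics]; omega
  rw [getD_sortedWithEndpoints_succ (by omega), List.getD_eq_getElem _ _ hk]
  obtain ⟨j, hj⟩ := mem_orderStatistics.1 (List.getElem_mem hk)
  exact ⟨j, hj.symm⟩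

lemma exists_getD_sortedWithEndpoints_eq_apply (j : Fin n) :
    ∃ i, 1 ≤ i ∧ i ≤ n ∧ (sortedWithEndpoints n X).getD i 0 = X j := by
  obtain ⟨k, hk, hkj⟩ := List.mem_iff_getElem.1 (mem_orderStatistics.2 ⟨j, rfl⟩)
  rw [length_orderStatistics] at hk
  refine ⟨k + 1, by omega, by omega, ?_⟩
  rwa [getD_sortedWithEndpoints_succ hk, List.getD_eq_getElem]

variable (hX : ∀ j, X j ∈ Icc (0 : ℝ) 1)
include hX

lemma pairwise_sortedWithEndpoints : (sortedWithEndpoints n X).Pairwise (· ≤ ·) := by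
  have hmem : ∀ y ∈ orderStatistics n X, y ∈ Icc (0 : ℝ) 1 := fun y hy => by
    obtain ⟨j, rfl⟩ := mem_orderStatistics.1 hy
    exact hX j
  simp only [sortedWithEndpoints_eq, List.pairwise_cons, List.pairwise_append, List.mem_append,
    List.mem_singleton, List.Pairwise.nil, List.not_mem_nil, pairwise_orderStatistics,
    true_and, IsEmpty.forall_iff, implies_true]
  refine ⟨?_, fun a ha b hb => hb ▸ (hmem a ha).2⟩
  rintro b (hb | rfl)
  · exact (hmem b hb).1
  · exact zero_le_one

lemma getD_sortedWithEndpoints_mono {i j : ℕ} (hij : i ≤ j) (hj : j < n + 2) :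
    (sortedWithEndpoints n X).getD i 0 ≤ (sortedWithEndpoints n X).getD j 0 := by
  rcases hij.eq_or_lt with rfl | hij
  · exact le_rfl
  · have hl := length_sortedWithEndpoints (X := X)
    rw [List.getD_eq_getElem _ _ (by omega), List.getD_eq_getElem _ _ (by omega)]
    exact List.pairwise_iff_getElem.1 (pairwise_sortedWithEndpoints hX) i j _ _ hij

lemma getD_sortedWithEndpoints_mem_Icc {i : ℕ} (hi : i < n + 2) :
    (sortedWithEndpoints n X).getD i 0 ∈ Icc (0 : ℝ) 1 := by
  have h0 := getD_sortedWithEndpoints_mono hX (Nat.zero_le i) hi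
  have h1 := getD_sortedWithEndpoints_mono hX (show i ≤ n + 1 by omega) (by omega)
  rw [getD_sortedWithEndpoints_zero] at h0
  rw [getD_sortedWithEndpoints_last] at h1
  exact ⟨h0, h1⟩

end OrderStatistics

section MaxSpacing

variable {n : ℕ} {X : Fin n → ℝ}

lemma spacing_le_maxSpacing {i : ℕ} (hi : i ≤ n) : spacing n X i ≤ maxSpacing n X :=
  Finset.le_sup' (spacing n X) (Finset.mem_range_succ_iff.2 hi)

lemma sub_le_maxSpacing_of_forall_notMem_Ico {a b : ℝ} (ha : 0 ≤ a) (hb : b ≤ 1)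
    (hgap : ∀ j, X j ∉ Ico a b) : b - a ≤ maxSpacing n X := by
  classical
  set e := fun i => (sortedWithEndpoints n X).getD i 0
  -- the last entry not exceeding `a` is followed by an entry beyond the gap
  set i := Nat.findGreatest (fun i => e i ≤ a) n
  have hin : i ≤ n := Nat.findGreatest_le n
  have hei : e i ≤ a := Nat.findGreatest_spec (P := fun i => e i ≤ a) (Nat.zero_le n) ha
  have hnext : b ≤ e (i + 1) := by
    rcases hin.eq_or_lt with hi | hi
    · rwa [hi, show e (n + 1) = 1 from getD_sortedWithEndpoints_last]
    · have hlt : a < e (i + 1) :=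
        not_le.1 (Nat.findGreatest_is_greatest (Nat.lt_succ_self i) (by omega))
      obtain ⟨j, hj⟩ :=
        exists_getD_sortedWithEndpoints_eq (X := X) (by omega) (by omega : i + 1 ≤ n)
      change e (i + 1) = X j at hj
      rw [hj] at hlt ⊢
      by_contra! hlt'
      exact hgap j ⟨hlt.le, hlt'⟩
  calc b - a ≤ e (i + 1) - e i := by linarith
    _ ≤ maxSpacing n X := spacing_le_maxSpacing hin

variable (hX : ∀ j, X j ∈ Icc (0 : ℝ) 1)
include hX

lemma maxSpacing_nonneg : 0 ≤ maxSpacing n X :=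
  (sub_nonneg.2 (getD_sortedWithEndpoints_mono hX zero_le_one (by omega))).trans
    (spacing_le_maxSpacing (Nat.zero_le n))

lemma maxSpacing_le_one : maxSpacing n X ≤ 1 := by
  refine Finset.sup'_le _ _ fun i hi => ?_
  have hi : i < n + 1 := Finset.mem_range.1 hi
  have h := getD_sortedWithEndpoints_mem_Icc hX (show i < n + 2 by omega)
  have h' := getD_sortedWithEndpoints_mem_Icc hX (show i + 1 < n + 2 by omega)
  simp only [spacing, mem_Icc] at h h' ⊢
  linarith

lemma maxSpacing_le_of_forall_exists_mem_Ioo {L : ℝ}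
    (hL : ∀ u v, 0 ≤ u → v ≤ 1 → L < v - u → ∃ j, X j ∈ Ioo u v) : maxSpacing n X ≤ L := by
  refine Finset.sup'_le _ _ fun i hi => ?_
  have hi : i < n + 1 := Finset.mem_range.1 hi
  by_contra! hgap
  obtain ⟨j, hj⟩ := hL _ _ (getD_sortedWithEndpoints_mem_Icc hX (by omega)).1
    (getD_sortedWithEndpoints_mem_Icc hX (by omega)).2 hgap
  -- `X j` is itself an entry of the sorted list, so it cannot lie strictly between neighbours
  obtain ⟨p, hp1, hpn, hpj⟩ := exists_getD_sortedWithEndpoints_eq_apply (X := X) j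
  rw [← hpj, mem_Ioo] at hj
  rcases le_or_gt p i with hpi | hpi
  · exact (getD_sortedWithEndpoints_mono hX hpi (by omega)).not_gt hj.1
  · exact (getD_sortedWithEndpoints_mono hX (Nat.succ_le_of_lt hpi) (by omega)).not_gt hj.2

end MaxSpacing

def gridCell (t : ℝ) (k : ℕ) : Set ℝ := Ico (k * t) ((k + 1) * t)

section GridCell

variable {t : ℝ}

lemma measurableSet_gridCell {k : ℕ} : MeasurableSet (gridCell t k) := measurableSet_Ico

lemma volume_real_gridCell (ht : 0 ≤ t) (k : ℕ) : volume.real (gridCell t k) = t := by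
  rw [gridCell, Real.volume_real_Ico_of_le (by nlinarith)]
  ring

lemma gridCell_subset_Icc (ht : 0 ≤ t) {k : ℕ} (hk : (k + 1) * t ≤ 1) :
    gridCell t k ⊆ Icc 0 1 :=
  Ico_subset_Icc_self.trans (Icc_subset_Icc (by positivity) hk)

lemma disjoint_gridCell (ht : 0 ≤ t) {k l : ℕ} (hkl : k ≠ l) :
    Disjoint (gridCell t k) (gridCell t l) := by
  wlog hlk : l < k generalizing k l
  · exact (this hkl.symm (by omega)).symm
  have : ((l : ℝ) + 1) * t ≤ k * t := by gcongr; exact_mod_cast hlk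
  rw [gridCell, gridCell, Ico_disjoint_Ico]
  exact (min_le_right _ _).trans (this.trans (le_max_left _ _))

lemma exists_gridCell_subset_Ioo (ht : 0 < t) {u v : ℝ} (hu : 0 ≤ u) (huv : 2 * t < v - u) :
    ∃ k : ℕ, (k + 1) * t < v ∧ gridCell t k ⊆ Ioo u v := by
  set k := ⌊u / t⌋₊ + 1
  have hlo : u < k * t := by
    rw [← div_lt_iff₀ ht]
    exact_mod_cast Nat.lt_floor_add_one (u / t)
  have hhi : (k + 1) * t < v := by
    have := Nat.floor_le (div_nonneg hu ht.le)
    calc (k + 1 : ℝ) * t ≤ (u / t + 2) * t := by gcongr ?_ * t; push_cast [k]; linarith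
      _ = u + 2 * t := by field_simp
      _ < v := by linarith
  exact ⟨k, hhi, fun x hx => ⟨hlo.trans_le hx.1, hx.2.trans hhi⟩⟩

end GridCell

lemma maxSpacing_le_of_forall_exists_mem_gridCell {n : ℕ} {X : Fin n → ℝ}
    (hX : ∀ j, X j ∈ Icc (0 : ℝ) 1) {s : ℝ} (hs : 0 < s)
    (hhit : ∀ k : ℕ, (k + 1) * s ≤ 1 → ∃ j, X j ∈ gridCell s k) :
    maxSpacing n X ≤ 2 * s := by
  refine maxSpacing_le_of_forall_exists_mem_Ioo hX fun u v hu hv huv => ?_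
  obtain ⟨k, hkv, hk⟩ := exists_gridCell_subset_Ioo hs hu huv
  obtain ⟨j, hj⟩ := hhit k (hkv.le.trans hv)
  exact ⟨j, hk hj⟩

lemma List.getElem_le_iff_lt_countP {α : Type*} [LinearOrder α] {l : List α}
    (hl : l.Pairwise (· ≤ ·)) {k : ℕ} (hk : k < l.length) (x : α) :
    l[k] ≤ x ↔ k < l.countP (· ≤ x) := by
  induction l generalizing k with
  | nil => simp at hk
  | cons a l ih =>
    rw [List.pairwise_cons] at hl
    by_cases hax : a ≤ x
    · cases k with
      | zero => simp [hax]
      | succ k => simpa [hax] using ih hl.2 (k := k) (by simpa using hk)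
    · have hl0 : l.countP (· ≤ x) = 0 :=
        List.countP_eq_zero.2 fun b hb hbx => hax ((hl.1 b hb).trans (by simpa using hbx))
      cases k with
      | zero => simp [hax, hl0]
      | succ k =>
        have := hl.1 _ (List.getElem_mem (by simpa using hk))
        simp only [List.getElem_cons_succ, List.countP_cons, hl0, hax, decide_false]
        exact iff_of_false (fun h => hax (this.trans h)) (by simp)

lemma List.countP_ofFn {α : Type*} {n : ℕ} (p : α → Bool) (f : Fin n → α) :
    (List.ofFn f).countP p = ∑ j, if p (f j) then 1 else 0 := by
  induction n with
  | zero => simp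
  | succ m ih =>
    rw [List.ofFn_succ, List.countP_cons, Fin.sum_univ_succ, ih, add_comm]

lemma measurable_getD_orderStatistics {n k : ℕ} (hk : k < n) :
    Measurable fun X : Fin n → ℝ => (orderStatistics n X).getD k 0 := by
  refine measurable_of_Iic fun x => ?_
  have hcount : Measurable fun X : Fin n → ℝ => ∑ j, if X j ≤ x then (1 : ℕ) else 0 :=
    Finset.measurable_sum _ fun j _ =>
      Measurable.ite (measurableSet_le (measurable_pi_apply j) measurable_const)
        measurable_const measurable_const
  convert hcount (measurableSet_Ioi (a := k)) using 1
  ext X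
  have hkX : k < (orderStatistics n X).length := length_orderStatistics.symm ▸ hk
  simp only [mem_preimage, mem_Iic, mem_Ioi, List.getD_eq_getElem _ _ hkX,
    List.getElem_le_iff_lt_countP pairwise_orderStatistics hkX, orderStatistics_perm.countP_eq,
    List.countP_ofFn, decide_eq_true_eq]

lemma measurable_getD_sortedWithEndpoints {n : ℕ} (k : ℕ) :
    Measurable fun X : Fin n → ℝ => (sortedWithEndpoints n X).getD k 0 := by
  rcases k with _ | k
  · exact measurable_const
  rcases lt_trichotomy k n with hk | rfl | hk
  · simp_rw [getD_sortedWithEndpoints_succ hk]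
    exact measurable_getD_orderStatistics hk
  · simp_rw [getD_sortedWithEndpoints_last]
    exact measurable_const
  · have : ∀ X : Fin n → ℝ, (sortedWithEndpoints n X).getD (k + 1) 0 = 0 := fun X =>
      List.getD_eq_default _ _ (by rw [length_sortedWithEndpoints]; omega)
    simp_rw [this]
    exact measurable_const

lemma measurable_maxSpacing (n : ℕ) : Measurable (maxSpacing n) :=
  Finset.measurable_range_sup'' (f := fun i X => spacing n X i) fun i _ =>
    (measurable_getD_sortedWithEndpoints (i + 1)).sub (measurable_getD_sortedWithEndpoints i)

section Bonferroni

variable {α : Type*} [MeasurableSpace α] {μ : Measure α} [IsFiniteMeasure μ]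
  {A : ℕ → Set α}

lemma sum_measureReal_le_measureReal_biUnion_add (hA : ∀ k, MeasurableSet (A k)) (m : ℕ) :
    ∑ k ∈ Finset.range m, μ.real (A k) ≤ μ.real (⋃ k ∈ Finset.range m, A k)
      + ∑ k ∈ Finset.range m, ∑ l ∈ Finset.range k, μ.real (A k ∩ A l) := by
  induction m with
  | zero => simp
  | succ m ih =>
    set B := ⋃ k ∈ Finset.range m, A k
    have hunion : ⋃ k ∈ Finset.range (m + 1), A k = B ∪ A m := by
      rw [Finset.range_add_one, Finset.set_biUnion_insert, union_comm]
    have hinter : μ.real (B ∩ A m) ≤ ∑ l ∈ Finset.range m, μ.real (A m ∩ A l) := by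
      calc μ.real (B ∩ A m) = μ.real (⋃ l ∈ Finset.range m, A m ∩ A l) := by
            simp_rw [B, iUnion₂_inter, inter_comm]
        _ ≤ _ := measureReal_biUnion_finset_le _ _
    have := measureReal_union_add_inter (μ := μ) (s := B) (hA m) (measure_ne_top _ _)
    rw [hunion, Finset.sum_range_succ, Finset.sum_range_succ]
    linarith

lemma mul_div_two_le_measureReal_biUnion (hA : ∀ k, MeasurableSet (A k)) {m : ℕ} {p : ℝ}
    (hp : ∀ k < m, μ.real (A k) = p) (hpair : ∀ k < m, ∀ l < k, μ.real (A k ∩ A l) ≤ p ^ 2)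
    (hmp : m * p ≤ 1) : m * p / 2 ≤ μ.real (⋃ k ∈ Finset.range m, A k) := by
  have hmp0 : 0 ≤ m * p := by
    rcases m.eq_zero_or_pos with rfl | hm
    · simp
    · exact mul_nonneg m.cast_nonneg (hp 0 hm ▸ measureReal_nonneg)
  have hpairs : ∑ k ∈ Finset.range m, ∑ l ∈ Finset.range k, μ.real (A k ∩ A l)
      ≤ (m * p) ^ 2 / 2 := by
    have hgauss : (∑ k ∈ Finset.range m, (k : ℝ)) * 2 = m * (m - 1) := by
      have := congrArg (Nat.cast (R := ℝ)) (Finset.sum_range_id_mul_two m)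
      rcases m.eq_zero_or_pos with rfl | hm
      · simp
      · push_cast [Nat.cast_sub hm] at this; exact this
    calc _ ≤ ∑ k ∈ Finset.range m, ∑ l ∈ Finset.range k, p ^ 2 :=
          Finset.sum_le_sum fun k hk => Finset.sum_le_sum fun l hl =>
            hpair k (Finset.mem_range.1 hk) l (Finset.mem_range.1 hl)
      _ = m * (m - 1) / 2 * p ^ 2 := by simp [← Finset.sum_mul, ← hgauss]
      _ ≤ (m * p) ^ 2 / 2 := by nlinarith [sq_nonneg p]
  have := sum_measureReal_le_measureReal_biUnion_add (μ := μ) hA m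
  rw [Finset.sum_congr rfl fun k hk => hp k (Finset.mem_range.1 hk)] at this
  simp only [Finset.sum_const, Finset.card_range, nsmul_eq_mul] at this
  nlinarith

end Bonferroni

lemma integral_le_add_measureReal {α : Type*} [MeasurableSpace α] {μ : Measure α}
    [IsProbabilityMeasure μ] {f : α → ℝ} (hf : Integrable f μ) (hf1 : ∀ᵐ x ∂μ, f x ≤ 1)
    {B : Set α} (hB : MeasurableSet B) {L : ℝ} (hL0 : 0 ≤ L) (hL : ∀ᵐ x ∂μ, x ∉ B → f x ≤ L) :
    ∫ x, f x ∂μ ≤ L + μ.real B := by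
  have hbound : ∀ᵐ x ∂μ, f x ≤ L + B.indicator 1 x := by
    filter_upwards [hf1, hL] with x hx1 hxL
    by_cases hx : x ∈ B
    · simp only [indicator_of_mem hx, Pi.one_apply]; linarith
    · simp only [indicator_of_notMem hx, add_zero]; exact hxL hx
  have hind : Integrable (B.indicator 1) μ := (integrable_const (1 : ℝ)).indicator hB
  calc ∫ x, f x ∂μ ≤ ∫ x, L + B.indicator 1 x ∂μ :=
        integral_mono_ae hf ((integrable_const L).add hind) hbound
    _ = L + μ.real B := by
        rw [integral_add (integrable_const L) hind, integral_const, integral_indicator_one hB]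
        simp

instance : IsProbabilityMeasure mu01 := ⟨by simp [mu01]⟩

noncomputable abbrev iidUniform (n : ℕ) : Measure (Fin n → ℝ) := Measure.pi fun _ => mu01

lemma mu01_real_compl {S : Set ℝ} (hS : MeasurableSet S) (hS01 : S ⊆ Icc 0 1) :
    mu01.real Sᶜ = 1 - volume.real S := by
  rw [probReal_compl_eq_one_sub hS, mu01, measureReal_restrict_apply hS, inter_eq_left.2 hS01]

lemma iidUniform_real_univ_pi_compl (n : ℕ) {S : Set ℝ} (hS : MeasurableSet S)
    (hS01 : S ⊆ Icc 0 1) :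
    (iidUniform n).real (univ.pi fun _ => Sᶜ) = (1 - volume.real S) ^ n := by
  rw [measureReal_def, Measure.pi_pi, Finset.prod_const, Finset.card_univ, Fintype.card_fin,
    ENNReal.toReal_pow, ← measureReal_def, mu01_real_compl hS hS01]

lemma ae_forall_mem_Icc (n : ℕ) : ∀ᵐ ω ∂iidUniform n, ∀ j, ω j ∈ Icc (0 : ℝ) 1 :=
  ae_all_iff.2 fun j => (measurePreserving_eval _ j).quasiMeasurePreserving.ae
    (ae_restrict_mem measurableSet_Icc)

lemma integrable_maxSpacing (n : ℕ) : Integrable (maxSpacing n) (iidUniform n) := by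
  refine .of_bound (measurable_maxSpacing n).aestronglyMeasurable 1 ?_
  filter_upwards [ae_forall_mem_Icc n] with ω hω
  rw [Real.norm_of_nonneg (maxSpacing_nonneg hω)]
  exact maxSpacing_le_one hω

section GridCellEvents

variable {n : ℕ} {t : ℝ}

lemma iidUniform_real_avoid_gridCell (ht : 0 ≤ t) {k : ℕ} (hk : (k + 1) * t ≤ 1) :
    (iidUniform n).real (univ.pi fun _ => (gridCell t k)ᶜ) = (1 - t) ^ n := by
  rw [iidUniform_real_univ_pi_compl n measurableSet_gridCell (gridCell_subset_Icc ht hk),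
    volume_real_gridCell ht]

lemma iidUniform_real_avoid_two_gridCells (ht : 0 ≤ t) {k l : ℕ} (hlk : l < k)
    (hk : (k + 1) * t ≤ 1) :
    (iidUniform n).real ((univ.pi fun _ => (gridCell t k)ᶜ) ∩ univ.pi fun _ => (gridCell t l)ᶜ)
      = (1 - 2 * t) ^ n := by
  have hl : (l + 1) * t ≤ 1 := le_trans (by gcongr) hk
  rw [← pi_inter_distrib, ← compl_union, iidUniform_real_univ_pi_compl n
      (measurableSet_gridCell.union measurableSet_gridCell)
      (union_subset (gridCell_subset_Icc ht hk) (gridCell_subset_Icc ht hl)),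
    measureReal_union (disjoint_gridCell ht hlk.ne') measurableSet_gridCell
      measure_Ico_lt_top.ne measure_Ico_lt_top.ne,
    volume_real_gridCell ht, volume_real_gridCell ht, two_mul]

end GridCellEvents

lemma mul_le_integral_maxSpacing {n : ℕ} {t : ℝ} (ht : 0 < t) {m : ℕ} (hmt : m * t ≤ 1)
    (hmp : m * (1 - t) ^ n ≤ 1) :
    t * (m * (1 - t) ^ n / 2) ≤ ∫ ω, maxSpacing n ω ∂iidUniform n := by
  set A := fun k : ℕ => univ.pi fun _ : Fin n => (gridCell t k)ᶜ
  have hcell : ∀ k < m, (k + 1 : ℝ) * t ≤ 1 := fun k hk =>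
    le_trans (by gcongr; exact_mod_cast hk) hmt
  -- emptiness of distinct cells is negatively correlated
  have hpair : ∀ k < m, ∀ l < k, (iidUniform n).real (A k ∩ A l) ≤ ((1 - t) ^ n) ^ 2 := by
    intro k hk l hl
    have h2t : 2 * t ≤ 1 := le_trans (by gcongr; norm_cast; omega) (hcell k hk)
    calc _ = (1 - 2 * t) ^ n := iidUniform_real_avoid_two_gridCells ht.le hl (hcell k hk)
      _ ≤ ((1 - t) ^ 2) ^ n := pow_le_pow_left₀ (by linarith) (by nlinarith) n
      _ = ((1 - t) ^ n) ^ 2 := by rw [← pow_mul, ← pow_mul, mul_comm]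
  have hunion : m * (1 - t) ^ n / 2 ≤ (iidUniform n).real (⋃ k ∈ Finset.range m, A k) :=
    mul_div_two_le_measureReal_biUnion (fun _ => .univ_pi fun _ => measurableSet_gridCell.compl)
      (fun k hk => iidUniform_real_avoid_gridCell ht.le (hcell k hk)) hpair hmp
  have hsub : ⋃ k ∈ Finset.range m, A k ⊆ {ω | t ≤ maxSpacing n ω} := by
    simp only [iUnion_subset_iff, Finset.mem_range]
    intro k hk ω hω
    have := sub_le_maxSpacing_of_forall_notMem_Ico (by positivity) (hcell k hk)
      fun j => mem_univ_pi.1 hω j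
    simpa [add_mul] using this
  have hnonneg : 0 ≤ᵐ[iidUniform n] maxSpacing n := by
    filter_upwards [ae_forall_mem_Icc n] with ω hω using maxSpacing_nonneg hω
  calc t * (m * (1 - t) ^ n / 2) ≤ t * (iidUniform n).real {ω | t ≤ maxSpacing n ω} := by
        gcongr; exact hunion.trans (measureReal_mono hsub)
    _ ≤ _ := mul_meas_ge_le_integral_of_nonneg hnonneg (integrable_maxSpacing n) t

lemma integral_maxSpacing_le_two_mul_add {n : ℕ} {s : ℝ} (hs : 0 < s) :
    ∫ ω, maxSpacing n ω ∂iidUniform n ≤ 2 * s + ⌊1 / s⌋₊ * (1 - s) ^ n := by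
  set m := ⌊1 / s⌋₊
  set A := fun k : ℕ => univ.pi fun _ : Fin n => (gridCell s k)ᶜ
  have hcell : ∀ k : ℕ, (k + 1) * s ≤ 1 ↔ k < m := fun k => by
    rw [← le_div_iff₀ hs, ← Nat.add_one_le_iff, Nat.le_floor_iff (by positivity)]
    push_cast; rfl
  have hbad : (iidUniform n).real (⋃ k ∈ Finset.range m, A k) ≤ m * (1 - s) ^ n := by
    refine (measureReal_biUnion_finset_le _ _).trans_eq ?_
    rw [Finset.sum_congr rfl fun k hk =>
      iidUniform_real_avoid_gridCell hs.le ((hcell k).2 (Finset.mem_range.1 hk))]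
    simp
  have hgood : ∀ᵐ ω ∂iidUniform n, ω ∉ ⋃ k ∈ Finset.range m, A k → maxSpacing n ω ≤ 2 * s := by
    filter_upwards [ae_forall_mem_Icc n] with ω hω hgood
    refine maxSpacing_le_of_forall_exists_mem_gridCell hω hs fun k hk => ?_
    by_contra! hempty
    exact hgood (mem_biUnion (Finset.mem_range.2 ((hcell k).1 hk)) (mem_univ_pi.2 hempty))
  have := integral_le_add_measureReal (integrable_maxSpacing n)
    (by filter_upwards [ae_forall_mem_Icc n] with ω hω using maxSpacing_le_one hω)
    (Finset.measurableSet_biUnion _ fun _ _ => .univ_pi fun _ => measurableSet_gridCell.compl)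
    (by positivity) hgood
  linarith

lemma Real.log_le_two_mul_sqrt_sub_one {x : ℝ} (hx : 0 < x) : Real.log x ≤ 2 * (√x - 1) := by
  have := Real.log_le_sub_one_of_pos (Real.sqrt_pos.2 hx)
  rw [Real.log_sqrt hx.le] at this
  linarith

lemma Real.exp_neg_two_mul_le_one_sub {x : ℝ} (h0 : 0 ≤ x) (h1 : x ≤ 1 / 2) :
    Real.exp (-(2 * x)) ≤ 1 - x := by
  rw [Real.exp_neg, inv_eq_one_div, div_le_iff₀ (Real.exp_pos _)]
  nlinarith [Real.add_one_le_exp (2 * x)]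

lemma log_div_le_integral_maxSpacing {n : ℕ} (hn : 2 ≤ n) :
    1 / 56 * Real.log n / n ≤ ∫ ω, maxSpacing n ω ∂iidUniform n := by
  have hn0 : (0 : ℝ) < n := by positivity
  have hlog2 : Real.log 2 ≤ Real.log n := Real.log_le_log (by norm_num) (by exact_mod_cast hn)
  have hlog : Real.log n ≤ 2 * (√n - 1) := Real.log_le_two_mul_sqrt_sub_one hn0
  have hsq : √n * √n = n := Real.mul_self_sqrt hn0.le
  have hsqrt : 0 < √(n : ℝ) := Real.sqrt_pos.2 hn0
  have hlogpos : 0 < Real.log n := by linarith [Real.log_two_gt_d9]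
  set t := Real.log n / 4 / n with ht_def
  have ht : 0 < t := by positivity
  have hlog4 : Real.log n / 4 ≤ n / 4 := by nlinarith [sq_nonneg (√(n : ℝ) - 1)]
  have ht4 : t ≤ 1 / 4 := by rw [div_le_iff₀ hn0]; linarith
  set p := (1 - t) ^ n
  have hp_le : p ≤ 6 / 7 := by
    calc p ≤ Real.exp (-(Real.log n / 4)) := Real.one_sub_div_pow_le_exp_neg (by linarith)
      _ ≤ 6 / 7 := by
        rw [Real.exp_neg, inv_eq_one_div, div_le_iff₀ (Real.exp_pos _)]
        linarith [Real.add_one_le_exp (Real.log n / 4), Real.log_two_gt_d9]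
  -- `p ≥ 1 / √n`, which beats `t ≈ log n / n`: the cells fit into `[0, 1]`
  have ht_le_p : t ≤ p := by
    have hexp : Real.exp (-(2 * t)) ^ n = (√n)⁻¹ := by
      rw [← Real.exp_nat_mul, ← Real.exp_log hsqrt, ← Real.exp_neg, Real.log_sqrt hn0.le]
      congr 1
      rw [ht_def]
      field_simp
      ring
    calc t ≤ √n / n := div_le_div_of_nonneg_right (by linarith) hn0.le
      _ = Real.exp (-(2 * t)) ^ n := by rw [hexp, Real.sqrt_div_self]
      _ ≤ p := pow_le_pow_left₀ (Real.exp_pos _).le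
          (Real.exp_neg_two_mul_le_one_sub ht.le (by linarith)) n
  have hp : 0 < p := ht.trans_le ht_le_p
  set m := ⌊1 / p⌋₊
  have hmp : m * p ≤ 1 := (le_div_iff₀ hp).1 (Nat.floor_le (by positivity))
  have hmp' : 1 - p ≤ m * p := by
    have := (div_lt_iff₀ hp).1 (Nat.lt_floor_add_one (1 / p))
    linarith
  have hmt : m * t ≤ 1 := le_trans (by gcongr) hmp
  calc 1 / 56 * Real.log n / n = t * (1 / 7 / 2) := by ring
    _ ≤ t * (m * p / 2) := by gcongr; linarith
    _ ≤ _ := mul_le_integral_maxSpacing ht hmt hmp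

lemma integral_maxSpacing_le_log_div {n : ℕ} (hn : 2 ≤ n) :
    ∫ ω, maxSpacing n ω ∂iidUniform n ≤ 6 * Real.log n / n := by
  have hn0 : (0 : ℝ) < n := by positivity
  have hlog2 : Real.log 2 ≤ Real.log n := Real.log_le_log (by norm_num) (by exact_mod_cast hn)
  have hlog : Real.log n ≤ 2 * (√n - 1) := Real.log_le_two_mul_sqrt_sub_one hn0
  have hsq : √n * √n = n := Real.mul_self_sqrt hn0.le
  have hlogpos : 0 < Real.log n := by linarith [Real.log_two_gt_d9]
  have h2log : 2 * Real.log n ≤ n := by nlinarith [sq_nonneg (√(n : ℝ) - 2)]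
  set s := 2 * Real.log n / n with hs_def
  have hs : 0 < s := by positivity
  have hs1 : s ≤ 1 := (div_le_one hn0).2 h2log
  have hpow : (1 - s) ^ n ≤ ((n : ℝ) ^ 2)⁻¹ := by
    calc (1 - s) ^ n ≤ Real.exp (-(2 * Real.log n)) := Real.one_sub_div_pow_le_exp_neg h2log
      _ = ((n : ℝ) ^ 2)⁻¹ := by rw [Real.exp_neg, two_mul, Real.exp_add, Real.exp_log hn0, sq]
  calc _ ≤ 2 * s + ⌊1 / s⌋₊ * (1 - s) ^ n := integral_maxSpacing_le_two_mul_add hs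
    _ ≤ 2 * s + 1 / s * ((n : ℝ) ^ 2)⁻¹ := by
        have hfloor : (⌊1 / s⌋₊ : ℝ) ≤ 1 / s := Nat.floor_le (by positivity)
        gcongr
    _ ≤ 6 * Real.log n / n := by
        have := Real.log_two_gt_d9
        rw [hs_def]
        field_simp
        nlinarith

theorem stmt7 :
    ∃ c C : ℝ, 0 < c ∧ 0 < C ∧
      ∀ n : ℕ, 2 ≤ n →
        c * Real.log n / n
            ≤ ∫ ω : Fin n → ℝ, maxSpacing n ω ∂(Measure.pi fun _ : Fin n => mu01) ∧
          (∫ ω : Fin n → ℝ, maxSpacing n ω ∂(Measure.pi fun _ : Fin n => mu01))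
            ≤ C * Real.log n / n :=
  ⟨1 / 56, 6, by norm_num, by norm_num, fun _ hn =>
    ⟨log_div_le_integral_maxSpacing hn, integral_maxSpacing_le_log_div hn⟩⟩
end

section
/- Let d ≥ 1 and 1 ≤ q < ∞. Let X_1,…,X_n be independent random points uniformly distributed in [0,1]^d and P_n = {X_1,…,X_n}. Then E[ ∫_{[0,1]^d} dist(x, P_n)^q dx ] = 2^{−q} · n! / ((q/d + 1)(q/d + 2) ⋯ (q/d + n)). -/
open MeasureTheory Set
open scoped ENNReal

/-!
Under the quotient map `ℝ^d → (ℝ/ℤ)^d` the uniform measure on the cube becomes Haar measure on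
the torus and `tdist` becomes its sup-metric, so for `r ≤ 1/2` every `tdist`-ball of radius `r`
has measure `(2r)^d`, wherever its centre is. Hence, for fixed `x`, the normalised volume
`V = (2 minᵢ dist(x, Xᵢ))^d` of the empty ball around `x` satisfies `P(V > v) = (1 - v)^n`: it is
Beta(1, n)-distributed, and the layer-cake formula gives
`E[minᵢ dist(x, Xᵢ)^q] = 2^(-q) E[V^(q/d)] = 2^(-q) (q/d) B(q/d, n + 1)`, the claimed constant.
As it does not depend on `x`, Fubini's theorem finishes the proof.
-/

/-- The maximum metric on the `d`-dimensional torus: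
`dist(x,y) = min_{k ∈ ℤ^d} ‖x + k − y‖_∞` for `x, y ∈ [0,1]^d`. -/
noncomputable def tdist (d : ℕ) (x y : Fin d → ℝ) : ℝ :=
  ⨅ k : Fin d → ℤ, ‖(x + fun i => (k i : ℝ)) - y‖

/-- The unit cube `[0,1]^d`. -/
def unitCube (d : ℕ) : Set (Fin d → ℝ) := Set.Icc 0 1

/-- The class `F_d` of functions `f : [0,1]^d → ℝ` that are `1`-Lipschitz with respect
to the torus metric `tdist`. -/
def LipClass (d : ℕ) : Set ((Fin d → ℝ) → ℝ) :=
  {f | ∀ x ∈ unitCube d, ∀ y ∈ unitCube d, |f x - f y| ≤ tdist d x y}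

/-- Lebesgue measure restricted to the unit cube `[0,1]^d`. -/
noncomputable def cubeMeasure (d : ℕ) : Measure (Fin d → ℝ) :=
  volume.restrict (unitCube d)

def toTorus (d : ℕ) (x : Fin d → ℝ) : UnitAddTorus (Fin d) := fun i => x i

theorem tdist_eq_dist_toTorus (d : ℕ) (x y : Fin d → ℝ) :
    tdist d x y = dist (toTorus d x) (toTorus d y) := by
  have key (k : Fin d → ℤ) :
      dist (toTorus d x) (toTorus d y) ≤ ‖(x + fun i => (k i : ℝ)) - y‖ := by
    refine dist_pi_le_iff (norm_nonneg _) |>.2 fun i => ?_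
    calc dist (toTorus d x i) (toTorus d y i)
        = ‖(((x + fun i => (k i : ℝ)) - y) i : UnitAddCircle)‖ := by
          simp [toTorus, dist_eq_norm]
      _ ≤ _ := QuotientAddGroup.norm_mk_le_norm.trans (norm_le_pi_norm _ i)
  refine le_antisymm ?_ (le_ciInf key)
  refine (ciInf_le ⟨0, ?_⟩ fun i => -round (x i - y i)).trans ?_
  · rintro _ ⟨k, rfl⟩
    exact norm_nonneg _
  refine pi_norm_le_iff_of_nonneg dist_nonneg |>.2 fun i => ?_
  calc _ = dist (toTorus d x i) (toTorus d y i) := by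
        rw [toTorus, toTorus, dist_eq_norm, ← AddCircle.coe_sub, UnitAddCircle.norm_eq]
        simp
        ring_nf
    _ ≤ _ := dist_le_pi_dist _ _ i

theorem tdist_nonneg (d : ℕ) (x y : Fin d → ℝ) : 0 ≤ tdist d x y := by
  rw [tdist_eq_dist_toTorus]
  exact dist_nonneg

theorem tdist_le_half (d : ℕ) (x y : Fin d → ℝ) : tdist d x y ≤ 1 / 2 := by
  rw [tdist_eq_dist_toTorus]
  refine dist_pi_le_iff (by norm_num) |>.2 fun i => ?_
  simpa [dist_eq_norm] using AddCircle.norm_le_half_period 1 one_ne_zero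

theorem Continuous.tdist {α : Type*} [TopologicalSpace α] {d : ℕ} {f g : α → Fin d → ℝ}
    (hf : Continuous f) (hg : Continuous g) : Continuous fun a => tdist d (f a) (g a) := by
  have h : Continuous (toTorus d) :=
    continuous_pi fun i => AddCircle.continuous_mk' 1 |>.comp (continuous_apply i)
  simp_rw [tdist_eq_dist_toTorus]
  exact (h.comp hf).dist (h.comp hg)

theorem iInf_tdist_mem_Icc {ι : Type*} [Finite ι] [Nonempty ι] (d : ℕ) (x : Fin d → ℝ)
    (y : ι → Fin d → ℝ) : ⨅ i, tdist d x (y i) ∈ Icc 0 (1 / 2) :=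
  ⟨le_ciInf fun i => tdist_nonneg d x (y i),
    (ciInf_le (finite_range _).bddBelow (Classical.arbitrary ι)).trans (tdist_le_half d x _)⟩

theorem measurePreserving_toTorus (d : ℕ) :
    MeasurePreserving (toTorus d) (cubeMeasure d) volume := by
  have hcube : cubeMeasure d = Measure.pi fun _ => volume.restrict (Ioc (0 : ℝ) (0 + 1)) := by
    rw [← Measure.restrict_pi_pi, zero_add, cubeMeasure, unitCube, volume_pi,
      Measure.restrict_congr_set Measure.univ_pi_Ioc_ae_eq_Icc]
    rfl
  rw [hcube]
  exact measurePreserving_pi _ _ fun _ => UnitAddCircle.measurePreserving_mk 0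

instance (d : ℕ) : IsProbabilityMeasure (cubeMeasure d) where
  measure_univ := by
    simpa [volume_pi, Measure.pi_univ] using (measurePreserving_toTorus d).measure_preimage
      (MeasurableSet.univ (α := UnitAddTorus (Fin d))).nullMeasurableSet

theorem cubeMeasure_tdist_le (d : ℕ) (x : Fin d → ℝ) {r : ℝ} (hr : 0 ≤ r) :
    cubeMeasure d {y | tdist d x y ≤ r} = ENNReal.ofReal (min 1 (2 * r)) ^ d := by
  have : {y | tdist d x y ≤ r} = toTorus d ⁻¹' Metric.closedBall (toTorus d x) r := by
    ext y
    simp [tdist_eq_dist_toTorus, dist_comm]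
  rw [this, (measurePreserving_toTorus d).measure_preimage
    measurableSet_closedBall.nullMeasurableSet, volume_pi, Measure.pi_closedBall _ _ hr]
  simp [AddCircle.volume_closedBall]

theorem cubeMeasure_lt_tdist (d : ℕ) (x : Fin d → ℝ) {r : ℝ} (hr₀ : 0 ≤ r) (hr : r ≤ 1 / 2) :
    cubeMeasure d {y | r < tdist d x y} = ENNReal.ofReal (1 - (2 * r) ^ d) := by
  have hmeas : MeasurableSet {y | tdist d x y ≤ r} :=
    measurableSet_le (continuous_const.tdist continuous_id).measurable measurable_const
  have h2r : (2 * r) ^ d ≤ 1 := pow_le_one₀ (by linarith) (by linarith)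
  have hcompl : {y | r < tdist d x y} = {y | tdist d x y ≤ r}ᶜ := by
    ext y
    simp
  rw [hcompl, prob_compl_eq_one_sub hmeas, cubeMeasure_tdist_le d x hr₀,
    min_eq_right (by linarith), ← ENNReal.ofReal_pow (by linarith), ← ENNReal.ofReal_one,
    ENNReal.ofReal_sub _ (by positivity)]

theorem measure_pi_lt_iInf {Ω ι : Type*} [MeasurableSpace Ω] [Fintype ι] [Nonempty ι]
    (μ : Measure Ω) [SigmaFinite μ] (f : Ω → ℝ) (t : ℝ) :
    Measure.pi (fun _ : ι => μ) {ω | t < ⨅ i, f (ω i)} = μ {y | t < f y} ^ Fintype.card ι := by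
  have : {ω : ι → Ω | t < ⨅ i, f (ω i)} = univ.pi fun _ => {y | t < f y} := by
    ext ω
    refine ⟨fun (h : t < _) i _ => h.trans_le (ciInf_le (finite_range _).bddBelow i),
      fun h => ?_⟩
    obtain ⟨i, hi⟩ := exists_eq_ciInf_of_finite (f := fun i => f (ω i))
    show t < _
    rw [← hi]
    exact h i (mem_univ i)
  rw [this, Measure.pi_pi, Finset.prod_const, Finset.card_univ]

theorem intervalIntegral_rpow_mul_one_sub_pow {a : ℝ} (ha : 0 < a) (n : ℕ) :
    ∫ u in (0 : ℝ)..1, u ^ (a - 1) * (1 - u) ^ n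
      = n.factorial / ∏ j ∈ Finset.range (n + 1), (a + j) := by
  have hreal :
      ∫ u in (0 : ℝ)..1, (u : ℂ) ^ ((a : ℂ) - 1) * (1 - (u : ℂ)) ^ ((n : ℂ) + 1 - 1)
        = ((∫ u in (0 : ℝ)..1, u ^ (a - 1) * (1 - u) ^ n : ℝ) : ℂ) := by
    rw [← intervalIntegral.integral_ofReal]
    refine intervalIntegral.integral_congr fun u hu => ?_
    rw [uIcc_of_le zero_le_one] at hu
    rw [add_sub_cancel_right, Complex.cpow_natCast]
    push_cast [Complex.ofReal_cpow hu.1]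
    rfl
  have key := Complex.betaIntegral_eval_nat_add_one_right (u := (a : ℂ)) (by simpa using ha) n
  rw [Complex.betaIntegral, hreal] at key
  exact_mod_cast key

theorem integral_rpow_of_meas_lt_eq_one_sub_pow {Ω : Type*} [MeasurableSpace Ω]
    {μ : Measure Ω} {V : Ω → ℝ} (hV : Measurable V) (hV0 : ∀ ω, 0 ≤ V ω) (hV1 : ∀ ω, V ω ≤ 1)
    {n : ℕ} (htail : ∀ v ∈ Ioo (0 : ℝ) 1, μ {ω | v < V ω} = ENNReal.ofReal ((1 - v) ^ n))
    {a : ℝ} (ha : 0 < a) :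
    ∫ ω, V ω ^ a ∂μ = n.factorial / ∏ k ∈ Finset.range n, (a + (k + 1)) := by
  have hnonneg : ∀ v ∈ Ioo (0 : ℝ) 1, 0 ≤ (1 - v) ^ n * v ^ (a - 1) := fun v hv =>
    mul_nonneg (pow_nonneg (by linarith [hv.2]) n) (Real.rpow_nonneg hv.1.le _)
  have hint : IntegrableOn (fun v : ℝ => (1 - v) ^ n * v ^ (a - 1)) (Ioo 0 1) := by
    have h := (intervalIntegrable_iff_integrableOn_Icc_of_le zero_le_one).1
      (intervalIntegral.intervalIntegrable_rpow' (r := a - 1) (a := 0) (b := 1) (by linarith))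
    exact (h.continuousOn_mul (by fun_prop) isCompact_Icc).mono_set Ioo_subset_Icc_self
  have hbeta : ∫ v in Ioo (0 : ℝ) 1, (1 - v) ^ n * v ^ (a - 1)
      = n.factorial / ∏ j ∈ Finset.range (n + 1), (a + j) := by
    rw [← integral_Ioc_eq_integral_Ioo, ← intervalIntegral.integral_of_le zero_le_one,
      ← intervalIntegral_rpow_mul_one_sub_pow ha]
    congr 1 with v
    ring
  have hempty : ∀ v ∈ Ici (1 : ℝ), μ {ω | v < V ω} = 0 := fun v hv =>
    measure_mono_null (fun ω (hω : v < V ω) => ((hV1 ω).trans hv).not_gt hω) measure_empty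
  have hlayer : ∫⁻ ω, ENNReal.ofReal (V ω ^ a) ∂μ
      = ENNReal.ofReal a
          * ENNReal.ofReal (∫ v in Ioo (0 : ℝ) 1, (1 - v) ^ n * v ^ (a - 1)) := by
    rw [lintegral_rpow_eq_lintegral_meas_lt_mul μ (ae_of_all _ hV0) hV.aemeasurable ha,
      ← Ioo_union_Ici_eq_Ioi zero_lt_one,
      lintegral_union measurableSet_Ici ((Iio_disjoint_Ici le_rfl).mono_left Ioo_subset_Iio_self),
      setLIntegral_congr_fun measurableSet_Ici fun v hv => by rw [hempty v hv, zero_mul],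
      lintegral_zero, add_zero, setLIntegral_congr_fun measurableSet_Ioo fun v hv => by
        rw [htail v hv, ← ENNReal.ofReal_mul (pow_nonneg (by linarith [hv.2]) n)],
      ofReal_integral_eq_lintegral_ofReal hint
        ((ae_restrict_iff' measurableSet_Ioo).2 (ae_of_all _ hnonneg))]
  rw [integral_eq_lintegral_of_nonneg_ae (ae_of_all _ fun ω => Real.rpow_nonneg (hV0 ω) a)
    (hV.pow_const a).aestronglyMeasurable, hlayer, ENNReal.toReal_mul,
    ENNReal.toReal_ofReal ha.le,
    ENNReal.toReal_ofReal (setIntegral_nonneg measurableSet_Ioo hnonneg), hbeta,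
    Finset.prod_range_succ']
  push_cast
  field_simp
  ring

theorem measure_pi_lt_two_mul_iInf_tdist_pow {ι : Type*} [Fintype ι] [Nonempty ι] {d : ℕ}
    (hd : d ≠ 0) (x : Fin d → ℝ) {v : ℝ} (hv : v ∈ Ioo (0 : ℝ) 1) :
    Measure.pi (fun _ : ι => cubeMeasure d) {ω | v < (2 * ⨅ i, tdist d x (ω i)) ^ d}
      = ENNReal.ofReal ((1 - v) ^ Fintype.card ι) := by
  set r := v ^ (d⁻¹ : ℝ) / 2 with hr_def
  have hr₀ : 0 ≤ r := div_nonneg (Real.rpow_nonneg hv.1.le _) zero_le_two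
  have hr : r ≤ 1 / 2 := by
    linarith [Real.rpow_le_one hv.1.le hv.2.le (inv_nonneg.2 (Nat.cast_nonneg d))]
  have h2r : (2 * r) ^ d = v := by
    rw [mul_div_cancel₀ _ two_ne_zero, Real.rpow_inv_natCast_pow hv.1.le hd]
  have hset : {ω : ι → Fin d → ℝ | v < (2 * ⨅ i, tdist d x (ω i)) ^ d}
      = {ω | r < ⨅ i, tdist d x (ω i)} := by
    ext ω
    show v < _ ↔ r < _
    rw [← Real.rpow_natCast,
      ← Real.rpow_inv_lt_iff_of_pos hv.1.le (mul_nonneg zero_le_two (iInf_tdist_mem_Icc d x ω).1)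
        (by positivity)]
    constructor <;> intro h <;> linarith
  rw [hset, measure_pi_lt_iInf, cubeMeasure_lt_tdist d x hr₀ hr, h2r,
    ← ENNReal.ofReal_pow (by linarith [hv.2])]

theorem integral_iInf_tdist_rpow {ι : Type*} [Fintype ι] [Nonempty ι] {d : ℕ} (hd : 0 < d)
    {q : ℝ} (hq : 0 < q) (x : Fin d → ℝ) :
    ∫ ω, (⨅ i, tdist d x (ω i)) ^ q ∂(Measure.pi fun _ : ι => cubeMeasure d)
      = 2 ^ (-q) * (Fintype.card ι).factorial
          / ∏ k ∈ Finset.range (Fintype.card ι), (q / d + (k + 1)) := by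
  have hrescale (ω : ι → Fin d → ℝ) : (⨅ i, tdist d x (ω i)) ^ q
      = 2 ^ (-q) * ((2 * ⨅ i, tdist d x (ω i)) ^ d) ^ (q / d) := by
    have hM := (iInf_tdist_mem_Icc d x ω).1
    rw [← Real.rpow_natCast, ← Real.rpow_mul (by positivity), mul_div_cancel₀ _ (by positivity),
      Real.mul_rpow zero_le_two hM, ← mul_assoc, ← Real.rpow_add two_pos]
    simp
  have hmeas : Measurable fun ω : ι → Fin d → ℝ => (2 * ⨅ i, tdist d x (ω i)) ^ d :=
    ((Measurable.iInf fun i => (continuous_const.tdist (continuous_apply i)).measurable).const_mul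
      2).pow_const d
  have hbound (ω : ι → Fin d → ℝ) : (2 * ⨅ i, tdist d x (ω i)) ^ d ∈ Icc 0 1 := by
    have hM := iInf_tdist_mem_Icc d x ω
    exact ⟨pow_nonneg (by linarith [hM.1]) d,
      pow_le_one₀ (by linarith [hM.1]) (by linarith [hM.2])⟩
  simp_rw [hrescale]
  rw [integral_const_mul, integral_rpow_of_meas_lt_eq_one_sub_pow hmeas
    (fun ω => (hbound ω).1) (fun ω => (hbound ω).2)
    (fun v hv => measure_pi_lt_two_mul_iInf_tdist_pow hd.ne' x hv) (by positivity), mul_div_assoc]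

theorem stmt12 (d : ℕ) (hd : 0 < d) (q : ℝ) (hq : 1 ≤ q) (n : ℕ) (hn : 0 < n) :
    (∫ ω : Fin n → Fin d → ℝ,
        ∫ x in unitCube d, (⨅ i, tdist d x (ω i)) ^ q
        ∂volume ∂(Measure.pi fun _ : Fin n => cubeMeasure d))
      = (2 : ℝ) ^ (-q) * (Nat.factorial n : ℝ)
          / ∏ k ∈ Finset.range n, (q / d + (k + 1)) := by
  have : Nonempty (Fin n) := ⟨⟨0, hn⟩⟩
  have hmeas : Measurable fun p : (Fin n → Fin d → ℝ) × (Fin d → ℝ) =>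
      (⨅ i, tdist d p.2 (p.1 i)) ^ q :=
    (Measurable.iInf fun i =>
      (continuous_snd.tdist ((continuous_apply i).comp continuous_fst)).measurable).pow_const q
  have hint : Integrable (Function.uncurry fun ω (x : Fin d → ℝ) => (⨅ i, tdist d x (ω i)) ^ q)
      ((Measure.pi fun _ : Fin n => cubeMeasure d).prod (cubeMeasure d)) := by
    refine Integrable.of_bound hmeas.aestronglyMeasurable 1 (ae_of_all _ fun p => ?_)
    have hM := iInf_tdist_mem_Icc d p.2 p.1
    change ‖(⨅ i, tdist d p.2 (p.1 i)) ^ q‖ ≤ 1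
    rw [Real.norm_of_nonneg (Real.rpow_nonneg hM.1 q)]
    exact Real.rpow_le_one hM.1 (by linarith [hM.2]) (by linarith)
  calc _ = ∫ x, ∫ ω, (⨅ i, tdist d x (ω i)) ^ q
          ∂(Measure.pi fun _ : Fin n => cubeMeasure d) ∂cubeMeasure d :=
        integral_integral_swap hint
    _ = _ := by
        simp_rw [integral_iInf_tdist_rpow hd (by linarith : 0 < q), Fintype.card_fin]
        simp
end

section
/- Let X and G be real normed vector spaces, let F ⊆ X be a nonempty convex and symmetric set (f ∈ F implies −f ∈ F), let S : X → G be linear, and let N : X → ℝ^n be linear. Define the local radius of zero information r(N, 0) = sup{ ‖S f‖_G : f ∈ F, N f = 0 } and the radius of information r(N) = inf_{φ : ℝ^n → G} sup_{f ∈ F} ‖S f − φ(N f)‖_G, where the infimum is over all (not necessarily linear) maps φ. Then r(N, 0) ≤ r(N) ≤ 2 · r(N, 0). -/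
open scoped ENNReal NNReal

theorem stmt18 {X G : Type*} [NormedAddCommGroup X] [NormedSpace ℝ X]
    [NormedAddCommGroup G] [NormedSpace ℝ G]
    (F : Set X) (hne : F.Nonempty) (hconv : Convex ℝ F) (hsym : ∀ f ∈ F, -f ∈ F)
    (n : ℕ) (S : X →ₗ[ℝ] G) (N : X →ₗ[ℝ] (Fin n → ℝ)) :
    (⨆ f : X, ⨆ (_ : f ∈ F ∧ N f = 0), (‖S f‖₊ : ℝ≥0∞))
        ≤ (⨅ φ : (Fin n → ℝ) → G, ⨆ f ∈ F, (‖S f - φ (N f)‖₊ : ℝ≥0∞)) ∧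
      (⨅ φ : (Fin n → ℝ) → G, ⨆ f ∈ F, (‖S f - φ (N f)‖₊ : ℝ≥0∞))
        ≤ 2 * ⨆ f : X, ⨆ (_ : f ∈ F ∧ N f = 0), (‖S f‖₊ : ℝ≥0∞) := by
  classical
  constructor
  · refine le_iInf fun φ => iSup_le fun f => iSup_le fun hf => ?_
    obtain ⟨hfF, hNf⟩ := hf
    have hfm : -f ∈ F := hsym f hfF
    have hNmf : N (-f) = 0 := by rw [map_neg, hNf, neg_zero]
    have key : (‖S f‖₊ : ℝ≥0∞) ≤
        (‖S f - φ (N f)‖₊ : ℝ≥0∞) ⊔ (‖S (-f) - φ (N (-f))‖₊ : ℝ≥0∞) := by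
      rw [hNf, hNmf]
      have hreal : ‖S f‖ ≤ max ‖S f - φ 0‖ ‖S (-f) - φ 0‖ := by
        rw [map_neg]
        have h2 : (2:ℝ) * ‖S f‖ ≤ ‖S f - φ 0‖ + ‖-S f - φ 0‖ := by
          have := norm_sub_le (S f - φ 0) (-S f - φ 0)
          have heq : (S f - φ 0) - (-S f - φ 0) = (2:ℝ) • S f := by
            rw [two_smul]; abel
          rw [heq, norm_smul] at this
          simpa using this
        rcases le_max_iff.mpr (Or.inl (le_refl ‖S f - φ 0‖)) with h
        nlinarith [le_max_left ‖S f - φ 0‖ ‖-S f - φ 0‖,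
          le_max_right ‖S f - φ 0‖ ‖-S f - φ 0‖]
      have : ‖S f‖₊ ≤ ‖S f - φ 0‖₊ ⊔ ‖S (-f) - φ 0‖₊ := by
        rw [← NNReal.coe_le_coe]
        simpa using hreal
      exact_mod_cast le_sup_iff.mp this |>.elim
        (fun h => le_sup_of_le_left (by exact_mod_cast h))
        (fun h => le_sup_of_le_right (by exact_mod_cast h))
    refine key.trans (sup_le ?_ ?_)
    · exact le_iSup₂_of_le f hfF le_rfl
    · exact le_iSup₂_of_le (-f) hfm le_rfl
  · set φ : (Fin n → ℝ) → G := fun y =>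
      if h : ∃ g, g ∈ F ∧ N g = y then S h.choose else 0 with hφ
    refine iInf_le_of_le φ (iSup₂_le fun f hf => ?_)
    have hex : ∃ g, g ∈ F ∧ N g = N f := ⟨f, hf, rfl⟩
    have hφf : φ (N f) = S hex.choose := by simp [hφ, dif_pos hex]
    obtain ⟨hgF, hgN⟩ := hex.choose_spec
    set g := hex.choose
    set h2 : X := (2⁻¹ : ℝ) • f + (2⁻¹ : ℝ) • (-g) with hh2
    have hh2F : h2 ∈ F := hconv hf (hsym g hgF) (by norm_num) (by norm_num) (by norm_num)
    have hh2N : N h2 = 0 := by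
      simp [hh2, map_add, map_smul, map_neg, hgN]
    have hSh2 : (2:ℝ) • S h2 = S f - φ (N f) := by
      rw [hφf, hh2]
      simp only [map_add, map_smul, map_neg, smul_add, smul_smul, smul_neg]
      norm_num
      abel
    have hnorm : (‖S f - φ (N f)‖₊ : ℝ≥0∞) = 2 * (‖S h2‖₊ : ℝ≥0∞) := by
      rw [← hSh2, nnnorm_smul]
      push_cast
      norm_num
    rw [hnorm]
    have : (‖S h2‖₊ : ℝ≥0∞) ≤ ⨆ f : X, ⨆ (_ : f ∈ F ∧ N f = 0), (‖S f‖₊ : ℝ≥0∞) :=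
      le_iSup_of_le h2 (le_iSup_of_le ⟨hh2F, hh2N⟩ le_rfl)
    exact mul_le_mul_right this 2
end
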